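/- arXiv:2411.19603 — 4 statements merged into one kernel-verified Lean document; each statement's English description precedes it below -/
import Mathlib

section
/- Kemeny's constant of the simple random walk on the path graph with n vertices (no loops) equals (1/3)(n² - 2n + 3/2). -/
open Matrix Polynomial Real Finset

/-- Kemeny-type sum: `∑ 1/(1-λ)` over the eigenvalues `λ ≠ 1` of `P`. -/
noncomputable def kemeny {n : ℕ} (P : Matrix (Fin n) (Fin n) ℝ) : ℂ :=
  ((((P.map (fun x : ℝ => (x : ℂ))).charpoly.roots).filter (· ≠ 1)).map
    (fun μ => (1 - μ)⁻¹)).sum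

/-- Adjacency matrix `A_n(α,β)` of the path on `n` vertices with loops of
weight `α` at the first vertex and `β` at the last vertex. -/
noncomputable def pathLoopA (n : ℕ) (a b : ℝ) : Matrix (Fin n) (Fin n) ℝ :=
  Matrix.of fun i j =>
    (if (i : ℕ) + 1 = (j : ℕ) ∨ (j : ℕ) + 1 = (i : ℕ) then 1 else 0)
    + (if i = j ∧ (i : ℕ) = 0 then a else 0)
    + (if i = j ∧ (i : ℕ) = n - 1 then b else 0)


noncomputable def uPoly : ℕ → Polynomial ℝ
  | 0 => 1
  | 1 => 2 * X
  | (k+2) => 2 * X * uPoly (k+1) - uPoly k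

lemma uPoly_sin (k : ℕ) (θ : ℝ) :
    Real.sin θ * (uPoly k).eval (Real.cos θ) = Real.sin ((k+1) * θ) := by
  induction k using Nat.twoStepInduction with
  | zero => simp [uPoly]
  | one =>
    simp only [uPoly, eval_mul, eval_ofNat, eval_X]
    rw [show ((1:ℕ)+1 : ℝ) * θ = 2 * θ by push_cast; ring, Real.sin_two_mul]
    ring
  | more k ih1 ih2 =>
    push_cast at ih1 ih2 ⊢
    simp only [uPoly, eval_sub, eval_mul, eval_ofNat, eval_X]
    have key : Real.sin (((k:ℝ) + 2 + 1) * θ)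
        = 2 * Real.cos θ * Real.sin (((k:ℝ)+1+1) * θ) - Real.sin (((k:ℝ) + 1) * θ) := by
      rw [show ((k:ℝ) + 2 + 1) * θ = ((k:ℝ)+1+1) * θ + θ by ring,
        show ((k:ℝ) + 1) * θ = ((k:ℝ)+1+1) * θ - θ by ring,
        Real.sin_add, Real.sin_sub]
      ring
    rw [key, ← ih1, ← ih2]
    ring

lemma uPoly_eval_one (k : ℕ) : (uPoly k).eval 1 = k + 1 := by
  induction k using Nat.twoStepInduction with
  | zero => simp [uPoly]
  | one => simp [uPoly]; norm_num
  | more k ih1 ih2 =>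
    simp only [uPoly, eval_sub, eval_mul, eval_ofNat, eval_X, ih1, ih2]
    push_cast; ring

lemma uPoly_deriv_one (k : ℕ) : (derivative (uPoly k)).eval 1 = k * (k+1) * (k+2) / 3 := by
  induction k using Nat.twoStepInduction with
  | zero => simp [uPoly]
  | one => simp [uPoly]; norm_num
  | more k ih1 ih2 =>
    simp only [uPoly, derivative_sub, derivative_mul, eval_sub, eval_add, eval_mul,
      derivative_ofNat, derivative_X, eval_ofNat, eval_X, eval_one, ih1, ih2,
      uPoly_eval_one, derivative_mul, eval_zero]
    push_cast; ring

lemma uPoly_natDegree_le (k : ℕ) : (uPoly k).natDegree ≤ k := by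
  induction k using Nat.twoStepInduction with
  | zero => simp [uPoly]
  | one =>
    simp only [uPoly]
    exact le_trans (natDegree_mul_le) (by simp)
  | more k ih1 ih2 =>
    simp only [uPoly]
    refine le_trans (natDegree_sub_le _ _) (max_le ?_ (by omega))
    refine le_trans (natDegree_mul_le) ?_
    have : (2 * X : ℝ[X]).natDegree ≤ 1 := le_trans natDegree_mul_le (by simp)
    omega

lemma uPoly_coeff (k : ℕ) : (uPoly k).coeff k = 2 ^ k := by
  induction k using Nat.twoStepInduction with
  | zero => simp [uPoly]
  | one => simp [uPoly, coeff_X]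
  | more k ih1 ih2 =>
    simp only [uPoly, coeff_sub]
    have h0 : (uPoly k).coeff (k+2) = 0 :=
      coeff_eq_zero_of_natDegree_lt (by have := uPoly_natDegree_le k; omega)
    have : (2 * X * uPoly (k+1) : ℝ[X]) = 2 * (X * uPoly (k+1)) := by ring
    rw [this, coeff_ofNat_mul, coeff_X_mul, ih2, h0]
    ring

open Finset in
lemma theta_mem_Ioo {d k : ℕ} (hk : k < d) :
    (((k:ℝ)+1) * π / (d+1)) ∈ Set.Ioo 0 π := by
  have hπ := Real.pi_pos
  have hd : (0:ℝ) < (d:ℝ) + 1 := by positivity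
  constructor
  · positivity
  · rw [div_lt_iff₀ hd]
    have : ((k:ℝ)+1) < (d:ℝ)+1 := by exact_mod_cast by omega
    nlinarith

open Finset in
lemma cos_theta_injOn (d : ℕ) :
    Set.InjOn (fun k : ℕ => Real.cos (((k:ℝ)+1) * π / (d+1))) (range d) := by
  intro a ha b hb hab
  simp only [coe_range, Set.mem_Iio] at ha hb
  have hπ := Real.pi_pos
  have h1 : ∀ k : ℕ, k < d → (((k:ℝ)+1) * π / (d+1)) ∈ Set.Icc 0 π :=
    fun k hk => Set.mem_Icc_of_Ioo (theta_mem_Ioo hk)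
  have heq : ((a:ℝ)+1) * π / (d+1) = ((b:ℝ)+1) * π / (d+1) :=
    Real.injOn_cos (h1 a ha) (h1 b hb) hab
  have hd : (0:ℝ) < (d:ℝ) + 1 := by positivity
  field_simp at heq
  exact_mod_cast add_right_cancel heq

lemma uPoly_root (d k : ℕ) (hk : k < d) :
    (uPoly d).eval (Real.cos (((k:ℝ)+1) * π / (d+1))) = 0 := by
  set θ := ((k:ℝ)+1) * π / (d+1) with hθ
  have hθmem := theta_mem_Ioo (d := d) hk
  have hsin : Real.sin θ ≠ 0 :=
    ne_of_gt (Real.sin_pos_of_pos_of_lt_pi hθmem.1 hθmem.2)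
  have h := uPoly_sin d θ
  have hval : ((d:ℝ)+1) * θ = ((k+1 : ℕ) : ℝ) * π := by
    rw [hθ]; push_cast; field_simp
  rw [hval, Real.sin_nat_mul_pi] at h
  exact (mul_eq_zero.mp h).resolve_left hsin

open Finset in
lemma uPoly_eq_prod (d : ℕ) :
    uPoly d = C ((2:ℝ)^d) *
      ∏ k ∈ range d, (X - C (Real.cos (((k:ℝ)+1) * π / (d+1)))) := by
  set q := C ((2:ℝ)^d) *
      ∏ k ∈ range d, (X - C (Real.cos (((k:ℝ)+1) * π / (d+1)))) with hq
  have hmon : (∏ k ∈ range d, (X - C (Real.cos (((k:ℝ)+1) * π / (d+1))))).Monic :=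
    monic_prod_of_monic _ _ (fun k _ => monic_X_sub_C _)
  have hdeg : (∏ k ∈ range d, (X - C (Real.cos (((k:ℝ)+1) * π / (d+1))))).natDegree = d := by
    rw [natDegree_prod _ _ (fun k _ => X_sub_C_ne_zero _)]
    simp
  have hqdeg : q.natDegree ≤ d := by
    rw [hq]
    refine le_trans natDegree_mul_le ?_
    simp [hdeg]
  have hqcoeff : q.coeff d = 2 ^ d := by
    have h2 := hmon.coeff_natDegree
    rw [hdeg] at h2
    rw [hq, coeff_C_mul, h2, mul_one]
  have hcoeff : (uPoly d - q).coeff d = 0 := by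
    rw [Polynomial.coeff_sub, uPoly_coeff, hqcoeff, sub_self]
  have hdlt : (uPoly d - q).degree < ((range d).card : ℕ) := by
    rw [card_range]
    rw [Polynomial.degree_lt_iff_coeff_zero]
    intro m hm
    rcases eq_or_lt_of_le (Nat.cast_le.mp hm) with h | h
    · rw [← h]; exact hcoeff
    · rw [Polynomial.coeff_sub, coeff_eq_zero_of_natDegree_lt, coeff_eq_zero_of_natDegree_lt,
        sub_self]
      · exact lt_of_le_of_lt hqdeg h
      · exact lt_of_le_of_lt (uPoly_natDegree_le d) h
  have := Polynomial.eq_of_degree_sub_lt_of_eval_index_eq (f := uPoly d) (g := q)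
    (v := fun k : ℕ => Real.cos (((k:ℝ)+1) * π / (d+1))) (range d)
    (cos_theta_injOn d) hdlt ?_
  · exact this
  · intro i hi
    rw [uPoly_root d i (mem_range.mp hi), hq]
    rw [eval_mul, eval_prod]
    rw [Finset.prod_eq_zero hi (by simp), mul_zero]

open Finset in
lemma derivative_finset_prod {ι : Type*} [DecidableEq ι] (s : Finset ι) (f : ι → ℝ[X]) :
    derivative (∏ i ∈ s, f i) = ∑ i ∈ s, (∏ j ∈ s.erase i, f j) * derivative (f i) := by
  rw [Finset.prod_eq_multiset_prod, Polynomial.derivative_prod, Finset.sum_eq_multiset_sum]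
  congr 1

open Finset in
lemma one_sub_cos_theta_pos {d k : ℕ} (hk : k < d) :
    0 < 1 - Real.cos (((k:ℝ)+1) * π / (d+1)) := by
  have h := theta_mem_Ioo (d := d) hk
  have : Real.cos (((k:ℝ)+1) * π / (d+1)) < 1 := by
    calc Real.cos (((k:ℝ)+1) * π / (d+1)) < Real.cos 0 := by
          apply Real.strictAntiOn_cos
          · exact Set.mem_Icc.mpr ⟨le_refl 0, le_of_lt Real.pi_pos⟩
          · exact Set.mem_Icc_of_Ioo h
          · exact h.1
      _ = 1 := Real.cos_zero
  linarith

open Finset in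
lemma interior_sum (d : ℕ) :
    ∑ k ∈ range d, (1 - Real.cos (((k:ℝ)+1) * π / (d+1)))⁻¹ = d * (d+2) / 3 := by
  set t : ℕ → ℝ := fun k => 1 - Real.cos (((k:ℝ)+1) * π / (d+1)) with ht
  have htpos : ∀ k ∈ range d, 0 < t k := fun k hk => one_sub_cos_theta_pos (mem_range.mp hk)
  have htne : ∀ k ∈ range d, t k ≠ 0 := fun k hk => ne_of_gt (htpos k hk)
  have hPne : (∏ k ∈ range d, t k) ≠ 0 := Finset.prod_ne_zero_iff.mpr htne
  -- evaluate uPoly d at 1 via the product formula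
  have hprod := uPoly_eq_prod d
  have hE1 : (2:ℝ)^d * ∏ k ∈ range d, t k = d + 1 := by
    have := congrArg (Polynomial.eval 1) hprod
    rw [uPoly_eval_one, eval_mul, eval_C, eval_prod] at this
    simp only [eval_sub, eval_X, eval_C] at this
    rw [this]
  have hE2 : (2:ℝ)^d * ∑ k ∈ range d, ∏ i ∈ (range d).erase k, t i
      = d * (d+1) * (d+2) / 3 := by
    have := congrArg (Polynomial.eval 1) (congrArg derivative hprod)
    rw [uPoly_deriv_one, derivative_C_mul, derivative_finset_prod] at this
    simp only [derivative_sub, derivative_X, derivative_C, sub_zero, mul_one,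
      eval_mul, eval_C, eval_finset_sum, eval_prod, eval_sub, eval_X] at this
    rw [← this]
  have herase : ∀ k ∈ range d, ∏ i ∈ (range d).erase k, t i
      = (∏ i ∈ range d, t i) * (t k)⁻¹ := by
    intro k hk
    have := Finset.prod_erase_mul (range d) t hk
    field_simp [htne k hk]
    linarith [this]
  have hsum : ∑ k ∈ range d, ∏ i ∈ (range d).erase k, t i
      = (∏ i ∈ range d, t i) * ∑ k ∈ range d, (t k)⁻¹ := by
    rw [Finset.mul_sum]
    exact Finset.sum_congr rfl herase
  rw [hsum] at hE2
  have h2d : ((2:ℝ)^d) ≠ 0 := by positivity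
  have hd1 : ((d:ℝ)+1) ≠ 0 := by positivity
  -- from hE1 : 2^d * P = d+1 ; hE2 : 2^d * (P * S) = d(d+1)(d+2)/3
  have step : ((d:ℝ)+1) * ∑ k ∈ range d, (t k)⁻¹
      = (2:ℝ)^d * ((∏ i ∈ range d, t i) * ∑ k ∈ range d, (t k)⁻¹) := by
    rw [← hE1]; ring
  have : ((d:ℝ)+1) * ∑ k ∈ range d, (t k)⁻¹ = d * (d+1) * (d+2) / 3 := by
    rw [step, hE2]
  field_simp at this
  have goal : ∑ k ∈ range d, (t k)⁻¹ = d * (d+2) / 3 := by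
    have h3 : (3:ℝ) ≠ 0 := by norm_num
    field_simp
    nlinarith [this]
  exact goal

open Finset in
lemma total_sum (d : ℕ) :
    ∑ k ∈ range (d+1), (1 - Real.cos (((k:ℝ)+1) * π / (d+1)))⁻¹
      = (2*((d:ℝ)+1)^2+1)/6 := by
  rw [Finset.sum_range_succ, interior_sum]
  have : ((d:ℝ)+1) * π / (d+1) = π := by
    have : ((d:ℝ)+1) ≠ 0 := by positivity
    field_simp
  rw [this, Real.cos_pi]
  norm_num
  ring

lemma pathA_apply {n : ℕ} (i j : Fin n) :
    pathLoopA n 0 0 i j = if (i : ℕ) + 1 = (j : ℕ) ∨ (j : ℕ) + 1 = (i : ℕ) then 1 else 0 := by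
  simp [pathLoopA]

lemma sum_ite_coe {n : ℕ} (f : Fin n → ℝ) (t : ℕ) :
    ∑ j : Fin n, (if t = (j:ℕ) then f j else 0) = if h : t < n then f ⟨t, h⟩ else 0 := by
  by_cases h : t < n
  · rw [dif_pos h]
    rw [Finset.sum_eq_single ⟨t, h⟩]
    · simp
    · intro j _ hj
      rw [if_neg]
      intro hc
      exact hj (Fin.ext hc.symm)
    · simp
  · rw [dif_neg h]
    apply Finset.sum_eq_zero
    intro j _
    rw [if_neg]
    intro hc
    exact h (hc ▸ j.isLt)

lemma mulVec_pathA {n : ℕ} (v : Fin n → ℝ) (i : Fin n) :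
    (pathLoopA n 0 0).mulVec v i
      = (if h : (i:ℕ)+1 < n then v ⟨(i:ℕ)+1, h⟩ else 0)
      + (if h : (i:ℕ) ≠ 0 then v ⟨(i:ℕ)-1, by omega⟩ else 0) := by
  unfold Matrix.mulVec dotProduct
  have hsplit : ∀ j : Fin n, pathLoopA n 0 0 i j * v j
      = (if (i:ℕ)+1 = (j:ℕ) then v j else 0) + (if (j:ℕ)+1 = (i:ℕ) then v j else 0) := by
    intro j
    rw [pathA_apply]
    by_cases h1 : (i:ℕ)+1 = (j:ℕ) <;> by_cases h2 : (j:ℕ)+1 = (i:ℕ)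
    · omega
    · simp [h1, h2]
    · simp [h1, h2]
    · simp [h1, h2]
  rw [Finset.sum_congr rfl (fun j _ => hsplit j), Finset.sum_add_distrib]
  congr 1
  · exact sum_ite_coe v ((i:ℕ)+1)
  · rcases Nat.eq_zero_or_pos (i:ℕ) with h | h
    · rw [dif_neg (by omega)]
      apply Finset.sum_eq_zero
      intro j _
      rw [if_neg (by omega)]
    · have : ∀ j : Fin n, ((j:ℕ)+1 = (i:ℕ)) = ((i:ℕ)-1 = (j:ℕ)) := by
        intro j; simp only [eq_iff_iff]; omega
      simp_rw [this]
      rw [sum_ite_coe v ((i:ℕ)-1), dif_pos (by omega), dif_pos (by omega)]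

lemma deg_apply {n : ℕ} (hn : 2 ≤ n) (i : Fin n) :
    (pathLoopA n 0 0).mulVec (fun _ => 1) i
      = if (i:ℕ) = 0 ∨ (i:ℕ) = n-1 then 1 else 2 := by
  rw [mulVec_pathA]
  have hi := i.isLt
  split_ifs with h1 h2 h3 h2 h3 <;> first | (exfalso; omega) | norm_num

lemma deg_ne_zero {n : ℕ} (hn : 2 ≤ n) (i : Fin n) :
    (pathLoopA n 0 0).mulVec (fun _ => 1) i ≠ 0 := by
  rw [deg_apply hn]; split_ifs <;> norm_num

lemma P_eq {n : ℕ} (hn : 2 ≤ n) (P : Matrix (Fin n) (Fin n) ℝ)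
    (hP : P = (Matrix.diagonal ((pathLoopA n 0 0).mulVec (fun _ => 1)))⁻¹ *
      pathLoopA n 0 0) :
    P = Matrix.diagonal (fun i => ((pathLoopA n 0 0).mulVec (fun _ => 1) i)⁻¹) *
      pathLoopA n 0 0 := by
  rw [hP]
  congr 1
  apply Matrix.inv_eq_right_inv
  rw [Matrix.diagonal_mul_diagonal]
  convert Matrix.diagonal_one with i
  exact mul_inv_cancel₀ (deg_ne_zero hn i)

lemma P_mulVec {n : ℕ} (hn : 2 ≤ n) (P : Matrix (Fin n) (Fin n) ℝ)
    (hP : P = (Matrix.diagonal ((pathLoopA n 0 0).mulVec (fun _ => 1)))⁻¹ *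
      pathLoopA n 0 0) (v : Fin n → ℝ) (i : Fin n) :
    P.mulVec v i = ((pathLoopA n 0 0).mulVec (fun _ => 1) i)⁻¹ *
      ((pathLoopA n 0 0).mulVec v i) := by
  rw [P_eq hn P hP, ← Matrix.mulVec_mulVec]
  rw [Matrix.mulVec_diagonal]

noncomputable def lamb (m k : ℕ) : ℝ := Real.cos (k * π / m)

noncomputable def pvec (m k : ℕ) : Fin (m+1) → ℝ :=
  fun i => Real.cos ((i : ℕ) * (k * π / m))

lemma eig {m : ℕ} (hm : 1 ≤ m) (k : ℕ) (P : Matrix (Fin (m+1)) (Fin (m+1)) ℝ)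
    (hP : P = (Matrix.diagonal ((pathLoopA (m+1) 0 0).mulVec (fun _ => 1)))⁻¹ *
      pathLoopA (m+1) 0 0) :
    P.mulVec (pvec m k) = lamb m k • pvec m k := by
  have hn : 2 ≤ m + 1 := by omega
  set α := (k:ℝ) * π / m with hα
  have hmR : ((m:ℝ)) ≠ 0 := Nat.cast_ne_zero.mpr (by omega)
  have hsin : Real.sin ((m:ℝ) * α) = 0 := by
    rw [hα, show (m:ℝ) * ((k:ℝ) * π / m) = (k:ℝ) * π by field_simp]
    exact Real.sin_nat_mul_pi k
  have hlamb : lamb m k = Real.cos α := rfl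
  funext i
  rw [P_mulVec hn P hP, deg_apply hn, mulVec_pathA]
  have hi := i.isLt
  simp only [Pi.smul_apply, smul_eq_mul, hlamb]
  by_cases hi0 : (i:ℕ) = 0
  · rw [dif_pos (by omega), dif_neg (by omega), if_pos (by omega)]
    simp only [pvec, hi0]
    push_cast
    simp [← hα]
  · by_cases him : (i:ℕ) = m
    · rw [dif_neg (by omega), dif_pos (by omega), if_pos (by omega)]
      simp only [pvec, him]
      have hcast : (((m:ℕ) - 1 : ℕ) : ℝ) = (m:ℝ) - 1 := by
        push_cast [Nat.cast_sub (by omega : 1 ≤ m)]; ring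
      rw [hcast]
      have expand : ((m:ℝ) - 1) * α = (m:ℝ) * α - α := by ring
      rw [expand, Real.cos_sub, hsin]
      ring
    · rw [dif_pos (by omega), dif_pos (by omega), if_neg (by omega)]
      simp only [pvec]
      have hcast : (((i:ℕ) - 1 : ℕ) : ℝ) = ((i:ℕ):ℝ) - 1 := by
        push_cast [Nat.cast_sub (by omega : 1 ≤ (i:ℕ))]; ring
      push_cast
      rw [hcast]
      have e1 : (((i:ℕ):ℝ) + 1) * α = ((i:ℕ):ℝ) * α + α := by ring
      have e2 : (((i:ℕ):ℝ) - 1) * α = ((i:ℕ):ℝ) * α - α := by ring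
      rw [e1, e2, Real.cos_add, Real.cos_sub]
      ring

lemma eval_charpoly' {n : ℕ} (M : Matrix (Fin n) (Fin n) ℝ) (t : ℝ) :
    (M.charpoly).eval t = (t • (1 : Matrix (Fin n) (Fin n) ℝ) - M).det := by
  rw [Matrix.charpoly, ← Polynomial.coe_evalRingHom, RingHom.map_det]
  congr 1
  ext i j
  by_cases h : i = j <;>
    simp [Matrix.charmatrix_apply, h, Matrix.one_apply, Matrix.smul_apply, Matrix.sub_apply,
      Matrix.diagonal_apply]

lemma isRoot_charpoly {m : ℕ} (hm : 1 ≤ m) (k : ℕ) (P : Matrix (Fin (m+1)) (Fin (m+1)) ℝ)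
    (hP : P = (Matrix.diagonal ((pathLoopA (m+1) 0 0).mulVec (fun _ => 1)))⁻¹ *
      pathLoopA (m+1) 0 0) :
    (Matrix.charpoly P).IsRoot (lamb m k) := by
  rw [Polynomial.IsRoot, eval_charpoly']
  rw [← Matrix.exists_mulVec_eq_zero_iff]
  refine ⟨pvec m k, ?_, ?_⟩
  · intro hzero
    have := congrFun hzero ⟨0, by omega⟩
    simp [pvec] at this
  · rw [Matrix.sub_mulVec, Matrix.smul_mulVec, Matrix.one_mulVec, eig hm k P hP,
      sub_self]

lemma lamb_injOn {m : ℕ} (hm : 1 ≤ m) :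
    Set.InjOn (lamb m) (Set.Iio (m+1)) := by
  intro a ha b hb hab
  simp only [Set.mem_Iio] at ha hb
  have hmR : (0:ℝ) < (m:ℝ) := by exact_mod_cast by omega
  have hmem : ∀ k : ℕ, k < m + 1 → ((k:ℝ) * π / m) ∈ Set.Icc 0 π := by
    intro k hk
    constructor
    · positivity
    · rw [div_le_iff₀ hmR]
      have : ((k:ℝ)) ≤ (m:ℝ) := by exact_mod_cast by omega
      nlinarith [Real.pi_pos]
  have heq : (a:ℝ) * π / m = (b:ℝ) * π / m :=
    Real.injOn_cos (hmem a ha) (hmem b hb) hab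
  field_simp at heq
  exact_mod_cast heq

lemma lamb_lt_one {m k : ℕ} (hm : 1 ≤ m) (hk1 : 1 ≤ k) (hk : k ≤ m) : lamb m k < 1 := by
  have hmR : (0:ℝ) < (m:ℝ) := by exact_mod_cast by omega
  have hθpos : 0 < (k:ℝ) * π / m := by
    have : (0:ℝ) < (k:ℝ) := by exact_mod_cast by omega
    positivity
  have hθle : (k:ℝ) * π / m ≤ π := by
    rw [div_le_iff₀ hmR]
    have : ((k:ℝ)) ≤ (m:ℝ) := by exact_mod_cast hk
    nlinarith [Real.pi_pos]
  calc lamb m k = Real.cos ((k:ℝ) * π / m) := rfl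
    _ < Real.cos 0 := by
        apply Real.strictAntiOn_cos
        · exact Set.mem_Icc.mpr ⟨le_refl 0, le_of_lt Real.pi_pos⟩
        · exact Set.mem_Icc.mpr ⟨le_of_lt hθpos, hθle⟩
        · exact hθpos
    _ = 1 := Real.cos_zero

lemma roots_charpoly_path {m : ℕ} (hm : 1 ≤ m) (P : Matrix (Fin (m+1)) (Fin (m+1)) ℝ)
    (hP : P = (Matrix.diagonal ((pathLoopA (m+1) 0 0).mulVec (fun _ => 1)))⁻¹ *
      pathLoopA (m+1) 0 0) :
    (Matrix.charpoly P).roots = (Multiset.range (m+1)).map (lamb m) := by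
  have hmonic := Matrix.charpoly_monic P
  have hne : Matrix.charpoly P ≠ 0 := hmonic.ne_zero
  have hdeg : (Matrix.charpoly P).natDegree = m + 1 := by
    rw [Matrix.charpoly_natDegree_eq_dim, Fintype.card_fin]
  set S := (Multiset.range (m+1)).map (lamb m) with hS
  have hnodup : S.Nodup := by
    refine Multiset.Nodup.map_on ?_ (Multiset.nodup_range (m+1))
    intro a ha b hb hab
    exact lamb_injOn hm (Multiset.mem_range.mp ha) (Multiset.mem_range.mp hb) hab
  have hle : S ≤ (Matrix.charpoly P).roots := by
    rw [Multiset.le_iff_count]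
    intro a
    by_cases ha : a ∈ S
    · rw [Multiset.count_eq_one_of_mem hnodup ha]
      obtain ⟨k, hk, rfl⟩ := Multiset.mem_map.mp ha
      exact Multiset.count_pos.mpr
        (Polynomial.mem_roots'.mpr ⟨hne, isRoot_charpoly hm k P hP⟩)
    · rw [Multiset.count_eq_zero_of_notMem ha]
      omega
  refine (Multiset.eq_of_le_of_card_le hle ?_).symm
  calc Multiset.card (Matrix.charpoly P).roots ≤ (Matrix.charpoly P).natDegree :=
        Polynomial.card_roots' _
    _ = m + 1 := hdeg
    _ = Multiset.card S := by rw [hS]; simp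

lemma splits_charpoly_path {m : ℕ} (hm : 1 ≤ m) (P : Matrix (Fin (m+1)) (Fin (m+1)) ℝ)
    (hP : P = (Matrix.diagonal ((pathLoopA (m+1) 0 0).mulVec (fun _ => 1)))⁻¹ *
      pathLoopA (m+1) 0 0) :
    (Matrix.charpoly P).Splits := by
  rw [Polynomial.splits_iff_card_roots, roots_charpoly_path hm P hP]
  simp [Matrix.charpoly_natDegree_eq_dim]

/-- Kemeny's constant of the simple random walk on the path graph
with `n` vertices (no loops) equals `(1/3)(n² - 2n + 3/2)`. -/
theorem kemeny_path {n : ℕ} (hn : 2 ≤ n)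
    (P : Matrix (Fin n) (Fin n) ℝ)
    (hP : P = (Matrix.diagonal ((pathLoopA n 0 0).mulVec (fun _ => 1)))⁻¹ *
      pathLoopA n 0 0) :
    kemeny P = (((1 / 3) * ((n : ℝ) ^ 2 - 2 * n + 3 / 2) : ℝ) : ℂ) := by
  obtain ⟨m, rfl⟩ : ∃ m, n = m + 1 := ⟨n - 1, by omega⟩
  have hm : 1 ≤ m := by omega
  -- identify the complex charpoly roots
  have hmap : P.map (fun x : ℝ => (x : ℂ)) = P.map Complex.ofRealHom := rfl
  have hchar : (P.map (fun x : ℝ => (x : ℂ))).charpoly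
      = (Matrix.charpoly P).map Complex.ofRealHom := by
    rw [hmap, Matrix.charpoly_map]
  have hroots : (P.map (fun x : ℝ => (x : ℂ))).charpoly.roots
      = (Multiset.range (m+1)).map (fun k => ((lamb m k : ℝ) : ℂ)) := by
    rw [hchar, (splits_charpoly_path hm P hP).roots_map,
      roots_charpoly_path hm P hP, Multiset.map_map]
    rfl
  rw [kemeny, hroots]
  rw [Multiset.filter_map, Multiset.map_map]
  have hfc : Multiset.filter ((fun μ : ℂ => μ ≠ 1) ∘ (fun k => ((lamb m k : ℝ) : ℂ)))
        (Multiset.range (m+1))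
      = Multiset.filter (fun k => ¬ k = 0) (Multiset.range (m+1)) := by
    apply Multiset.filter_congr
    intro k hk
    have hk' : k < m + 1 := Multiset.mem_range.mp hk
    simp only [Function.comp_apply, ne_eq, not_iff_not]
    constructor
    · intro h
      by_contra hk0
      have hlt : lamb m k < 1 := lamb_lt_one hm (by omega) (by omega)
      have : lamb m k = 1 := by exact_mod_cast h
      linarith
    · rintro rfl
      have h0 : lamb m 0 = 1 := by simp [lamb]
      rw [h0]; norm_num
  rw [hfc]
  -- turn the multiset sum into a Finset sum
  have hsum : ((Multiset.filter (fun k => ¬ k = 0) (Multiset.range (m+1))).map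
        ((fun μ : ℂ => (1 - μ)⁻¹) ∘ (fun k => ((lamb m k : ℝ) : ℂ)))).sum
      = ∑ k ∈ (Finset.range (m+1)).filter (fun k => ¬ k = 0),
          ((1 : ℂ) - ((lamb m k : ℝ) : ℂ))⁻¹ := by
    rw [Finset.sum_eq_multiset_sum]
    rfl
  rw [hsum]
  have hcast : ∀ k, ((1 : ℂ) - ((lamb m k : ℝ) : ℂ))⁻¹
      = (((1 - lamb m k)⁻¹ : ℝ) : ℂ) := by
    intro k; push_cast; ring
  simp_rw [hcast]
  rw [← Complex.ofReal_sum]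
  rw [Complex.ofReal_inj]
  -- now a real computation
  have hfilter : ∑ k ∈ (Finset.range (m+1)).filter (fun k => ¬ k = 0),
        (1 - lamb m k)⁻¹
      = ∑ k ∈ Finset.range m, (1 - lamb m (k+1))⁻¹ := by
    have h1 := Finset.sum_filter_add_sum_filter_not (Finset.range (m+1))
      (fun k => k = 0) (fun k => (1 - lamb m k)⁻¹)
    have h2 : (Finset.range (m+1)).filter (fun k => k = 0) = {0} := by
      rw [Finset.filter_eq']
      simp
    have h3 : ∑ k ∈ Finset.range (m+1), (1 - lamb m k)⁻¹
        = (∑ k ∈ Finset.range m, (1 - lamb m (k+1))⁻¹) + (1 - lamb m 0)⁻¹ :=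
      Finset.sum_range_succ' _ m
    rw [h2] at h1
    simp only [Finset.sum_singleton] at h1
    linarith [h1, h3]
  rw [hfilter]
  obtain ⟨d, rfl⟩ : ∃ d, m = d + 1 := ⟨m - 1, by omega⟩
  have hts := total_sum d
  have heq : ∑ k ∈ Finset.range (d+1), (1 - lamb (d+1) (k+1))⁻¹
      = ∑ k ∈ Finset.range (d+1), (1 - Real.cos (((k:ℝ)+1) * π / ((d:ℝ)+1)))⁻¹ := by
    apply Finset.sum_congr rfl
    intro k _
    congr 2
    simp only [lamb]
    push_cast
    ring_nf
  rw [heq, hts]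
  push_cast
  ring
end

section
/- Kemeny's constant of the random walk on the path graph with n vertices with a unit loop added at both endpoints equals (1/3)(n² - 1). -/
open Matrix Polynomial

section Aux
open Polynomial.Chebyshev Real

lemma U_eval_one : ∀ m : ℕ, (U ℝ m).eval 1 = m + 1 := by
  intro m
  induction m using Nat.twoStepInduction with
  | zero => simp
  | one => norm_num
  | more m ih1 ih2 =>
    have h : ((m+2 : ℕ) : ℤ) = (m:ℤ) + 2 := by push_cast; ring
    have h1 : ((m+1 : ℕ) : ℤ) = (m:ℤ) + 1 := by push_cast; ring
    rw [h, U_add_two, ← h1]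
    simp only [eval_sub, eval_mul, eval_ofNat, eval_X, ih1, ih2]
    push_cast; ring

lemma U_deriv_eval_one : ∀ m : ℕ, 3 * (derivative (U ℝ m)).eval 1 = m * (m+1) * (m+2) := by
  intro m
  induction m using Nat.twoStepInduction with
  | zero => simp
  | one => simp [derivative_mul]; norm_num
  | more m ih1 ih2 =>
    have h : ((m+2 : ℕ) : ℤ) = (m:ℤ) + 2 := by push_cast; ring
    have h1 : ((m+1 : ℕ) : ℤ) = (m:ℤ) + 1 := by push_cast; ring
    rw [h, U_add_two, ← h1]
    have e1 := U_eval_one (m+1)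
    rw [derivative_sub, derivative_mul, derivative_mul]
    simp only [eval_sub, eval_mul, eval_add, eval_ofNat, eval_X, derivative_X,
      derivative_ofNat, eval_one, eval_zero, e1]
    push_cast at ih1 ih2 e1 ⊢
    linear_combination 2*ih2 - ih1

lemma U_natDegree : ∀ m : ℕ, (U ℝ m).natDegree = m ∧ U ℝ m ≠ 0 := by
  intro m
  induction m using Nat.twoStepInduction with
  | zero => simp
  | one =>
    have h1 : ((1:ℕ):ℤ) = 1 := by norm_num
    rw [h1, U_one]
    constructor
    · simp [natDegree_mul (by norm_num : (2 : ℝ[X]) ≠ 0) (X_ne_zero)]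
    · intro h
      have := congrArg (fun p => Polynomial.coeff p 1) h
      simp at this
  | more m ih1 ih2 =>
    have h : ((m+2 : ℕ) : ℤ) = (m:ℤ) + 2 := by push_cast; ring
    have h1 : ((m+1 : ℕ) : ℤ) = (m:ℤ) + 1 := by push_cast; ring
    rw [h, U_add_two, ← h1]
    have h2X : (2 * X : ℝ[X]) ≠ 0 := by
      intro hc
      have := congrArg (fun p => Polynomial.coeff p 1) hc
      simp at this
    have hmul : (2 * X * U ℝ (m+1 : ℕ)).natDegree = m + 2 := by
      rw [natDegree_mul h2X ih2.2, ih2.1]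
      simp [natDegree_mul (by norm_num : (2 : ℝ[X]) ≠ 0) (X_ne_zero (R := ℝ))]
      ring
    have hlt : (U ℝ (m : ℕ)).natDegree < (2 * X * U ℝ (m+1 : ℕ)).natDegree := by
      rw [hmul, ih1.1]; omega
    constructor
    · rw [natDegree_sub_eq_left_of_natDegree_lt hlt, hmul]
    · intro hc
      have := natDegree_sub_eq_left_of_natDegree_lt hlt
      rw [hc, hmul, natDegree_zero] at this
      omega

lemma sum_inv_mul_prod (s : Finset ℕ) (f : ℕ → ℝ) (hf : ∀ k ∈ s, f k ≠ 1) :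
    (∑ k ∈ s, (1 - f k)⁻¹) * (∏ k ∈ s, (1 - f k)) =
      (derivative (∏ k ∈ s, (X - C (f k)))).eval 1 := by
  classical
  induction s using Finset.induction_on with
  | empty => simp
  | insert a s' ha ih =>
    have hb0 : (1 : ℝ) - f a ≠ 0 := sub_ne_zero.2 (Ne.symm (hf a (Finset.mem_insert_self a s')))
    rw [Finset.sum_insert ha, Finset.prod_insert ha, Finset.prod_insert ha,
      derivative_mul, eval_add, eval_mul, eval_mul]
    simp only [derivative_sub, derivative_X, derivative_C, sub_zero, eval_one, one_mul,
      eval_sub, eval_X, eval_C, eval_prod]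
    rw [← ih (fun k hk => hf k (Finset.mem_insert_of_mem hk))]
    field_simp

open Real in
lemma cheb_sum (n : ℕ) (hn : 2 ≤ n) :
    ∑ k ∈ Finset.Ioo 0 n, (1 - Real.cos (k * π / n))⁻¹ = ((n:ℝ)^2 - 1) / 3 := by
  classical
  have hn0 : (0:ℝ) < n := by positivity
  set f : ℕ → ℝ := fun k => Real.cos (k * π / n) with hf
  -- injectivity of f on [0, n]
  have hinj : ∀ k1 k2 : ℕ, k1 ≤ n → k2 ≤ n → f k1 = f k2 → k1 = k2 := by
    intro k1 k2 h1 h2 hfe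
    have m1 : (k1 * π / n) ∈ Set.Icc 0 π := by
      constructor
      · positivity
      · rw [div_le_iff₀ hn0]
        have : (k1:ℝ) ≤ n := by exact_mod_cast h1
        nlinarith [Real.pi_pos]
    have m2 : (k2 * π / n) ∈ Set.Icc 0 π := by
      constructor
      · positivity
      · rw [div_le_iff₀ hn0]
        have : (k2:ℝ) ≤ n := by exact_mod_cast h2
        nlinarith [Real.pi_pos]
    have heq := Real.injOn_cos m1 m2 hfe
    have hπ := Real.pi_pos
    have hne : π / (n:ℝ) ≠ 0 := by positivity
    have h2 : (k1:ℝ) = (k2:ℝ) := by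
      have h3 : (k1:ℝ) * (π/n) = (k2:ℝ) * (π/n) := by
        rw [← mul_div_assoc, ← mul_div_assoc]; exact heq
      exact mul_right_cancel₀ hne h3
    exact_mod_cast h2
  have hf1 : ∀ k ∈ Finset.Ioo 0 n, f k ≠ 1 := by
    intro k hk hke
    rw [Finset.mem_Ioo] at hk
    have : f k = f 0 := by rw [hke]; simp [hf]
    have := hinj k 0 (le_of_lt hk.2) (by omega) this
    omega
  -- each f k is a root of U (n-1)
  have hroot : ∀ k ∈ Finset.Ioo 0 n, (U ℝ ((n-1:ℕ):ℤ)).IsRoot (f k) := by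
    intro k hk
    rw [Finset.mem_Ioo] at hk
    have hθpos : 0 < k * π / n := by
      have : 0 < (k:ℝ) := by exact_mod_cast hk.1
      positivity
    have hθlt : k * π / n < π := by
      rw [div_lt_iff₀ hn0]
      have : (k:ℝ) < n := by exact_mod_cast hk.2
      nlinarith [Real.pi_pos]
    have hsin : Real.sin (k * π / n) ≠ 0 :=
      ne_of_gt (Real.sin_pos_of_pos_of_lt_pi hθpos hθlt)
    have := Polynomial.Chebyshev.U_real_cos (k * π / n) ((n-1:ℕ):ℤ)
    have harg : ((((n-1:ℕ):ℤ):ℝ) + 1) * (k * π / n) = k * π := by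
      have h1 : ((((n-1:ℕ):ℤ):ℝ)) = (n:ℝ) - 1 := by
        push_cast [Nat.cast_sub (by omega : 1 ≤ n)]; ring
      rw [h1]; field_simp; ring
    rw [harg, Real.sin_nat_mul_pi] at this
    have := mul_eq_zero.1 this
    rcases this with h | h
    · exact h
    · exact absurd h hsin
  set q : ℝ[X] := ∏ k ∈ Finset.Ioo 0 n, (X - C (f k)) with hq
  have hqmonic : q.Monic := monic_prod_of_monic _ _ (fun k _ => monic_X_sub_C _)
  have hqne : q ≠ 0 := hqmonic.ne_zero
  have hqdeg : q.natDegree = n - 1 := by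
    rw [hq, natDegree_prod _ _ (fun k _ => X_sub_C_ne_zero _)]
    simp [natDegree_X_sub_C]
  have hdvd : q ∣ U ℝ ((n-1:ℕ):ℤ) := by
    apply Finset.prod_dvd_of_coprime
    · intro k1 h1 k2 h2 hne
      simp only [Function.onFun]
      apply Polynomial.isCoprime_X_sub_C_of_isUnit_sub
      apply isUnit_iff_ne_zero.2
      apply sub_ne_zero.2
      intro he
      exact hne (hinj k1 k2 (le_of_lt (Finset.mem_Ioo.1 h1).2)
        (le_of_lt (Finset.mem_Ioo.1 h2).2) he)
    · intro k hk
      exact dvd_iff_isRoot.2 (hroot k hk)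
  obtain ⟨r, hr⟩ := hdvd
  obtain ⟨hUdeg, hUne⟩ := U_natDegree (n-1)
  have hrne : r ≠ 0 := by
    rintro rfl
    rw [mul_zero] at hr
    exact hUne hr
  have hrdeg : r.natDegree = 0 := by
    have := natDegree_mul hqne hrne
    rw [← hr, hUdeg, hqdeg] at this
    omega
  have hrc : r = C (r.coeff 0) := eq_C_of_natDegree_eq_zero hrdeg
  set c : ℝ := r.coeff 0 with hc
  have hcne : c ≠ 0 := by
    intro h
    rw [hrc, h, map_zero] at hrne
    exact hrne rfl
  -- evaluations
  have hU1 : (U ℝ ((n-1:ℕ):ℤ)).eval 1 = (n:ℝ) := by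
    rw [U_eval_one (n-1)]
    push_cast [Nat.cast_sub (by omega : 1 ≤ n)]
    ring
  have hU1' : q.eval 1 * c = (n:ℝ) := by
    rw [← hU1, hr, hrc, eval_mul, eval_C]
  have hUd : (derivative (U ℝ ((n-1:ℕ):ℤ))).eval 1 = (derivative q).eval 1 * c := by
    rw [hr, hrc, derivative_mul, derivative_C, mul_zero, add_zero, eval_mul, eval_C]
  have hUd1 : 3 * (derivative (U ℝ ((n-1:ℕ):ℤ))).eval 1 = ((n:ℝ)-1) * n * (n+1) := by
    rw [U_deriv_eval_one (n-1)]
    push_cast [Nat.cast_sub (by omega : 1 ≤ n)]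
    ring
  have hsum := sum_inv_mul_prod (Finset.Ioo 0 n) f hf1
  have hqeval : q.eval 1 = ∏ k ∈ Finset.Ioo 0 n, (1 - f k) := by
    rw [hq, eval_prod]
    simp
  rw [← hqeval, ← hq] at hsum
  -- combine
  set S : ℝ := ∑ k ∈ Finset.Ioo 0 n, (1 - f k)⁻¹ with hS
  have key : S * (n:ℝ) = (derivative q).eval 1 * c := by
    rw [← hU1', ← mul_assoc, hsum]
  rw [← hUd] at key
  have hn' : (n:ℝ) ≠ 0 := ne_of_gt hn0
  field_simp
  nlinarith [key, hUd1]


noncomputable def pv (n k : ℕ) : Fin n → ℝ :=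
  fun j => Real.cos ((2 * (j:ℝ) + 1) * ((k:ℝ) * π / (2 * n)))

lemma pathLoopA_mulVec (n k : ℕ) (hn : 2 ≤ n) (hk : k < n) :
    (pathLoopA n 1 1).mulVec (pv n k) =
      (2 * Real.cos ((k:ℝ) * π / n)) • (pv n k) := by
  have hn0 : (0:ℝ) < n := by positivity
  set a : ℝ := (k:ℝ) * π / (2 * n) with ha
  have h2a : (k:ℝ) * π / n = 2 * a := by rw [ha]; field_simp
  have h2na : 2 * (n:ℝ) * a = (k:ℝ) * π := by rw [ha]; field_simp
  have tkey : ∀ x y : ℝ, Real.cos (x + y) + Real.cos (x - y) = 2 * Real.cos y * Real.cos x := by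
    intro x y; rw [Real.cos_add, Real.cos_sub]; ring
  funext i
  -- expand the sum
  have expand : (pathLoopA n 1 1).mulVec (pv n k) i =
      (∑ j : Fin n, (if (i:ℕ) + 1 = (j:ℕ) then (1:ℝ) else 0) * pv n k j)
      + (∑ j : Fin n, (if (j:ℕ) + 1 = (i:ℕ) then (1:ℝ) else 0) * pv n k j)
      + (∑ j : Fin n, (if i = j ∧ (i:ℕ) = 0 then (1:ℝ) else 0) * pv n k j)
      + (∑ j : Fin n, (if i = j ∧ (i:ℕ) = n - 1 then (1:ℝ) else 0) * pv n k j) := by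
    simp only [Matrix.mulVec, dotProduct]
    rw [← Finset.sum_add_distrib, ← Finset.sum_add_distrib, ← Finset.sum_add_distrib]
    refine Finset.sum_congr rfl fun j _ => ?_
    simp only [pathLoopA, Matrix.of_apply, dotProduct]
    have hsplit : (if (i:ℕ) + 1 = (j:ℕ) ∨ (j:ℕ) + 1 = (i:ℕ) then (1:ℝ) else 0) =
        (if (i:ℕ) + 1 = (j:ℕ) then (1:ℝ) else 0) + (if (j:ℕ) + 1 = (i:ℕ) then (1:ℝ) else 0) := by
      by_cases h1 : (i:ℕ) + 1 = (j:ℕ) <;> by_cases h2 : (j:ℕ) + 1 = (i:ℕ) <;>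
        simp [h1, h2] <;> omega
    rw [hsplit]; ring
  have hsumR : ∑ j : Fin n, (if (i:ℕ) + 1 = (j:ℕ) then (1:ℝ) else 0) * pv n k j =
      if h : (i:ℕ) + 1 < n then pv n k ⟨(i:ℕ)+1, h⟩ else 0 := by
    by_cases h : (i:ℕ) + 1 < n
    · rw [dif_pos h, Finset.sum_eq_single (⟨(i:ℕ)+1, h⟩ : Fin n)]
      · rw [if_pos rfl, one_mul]
      · intro b _ hb
        rw [if_neg, zero_mul]
        intro hc
        apply hb; apply Fin.ext; simp only [Fin.val_mk]; omega
      · intro hmem; exact absurd (Finset.mem_univ _) hmem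
    · rw [dif_neg h]
      apply Finset.sum_eq_zero
      intro j _
      rw [if_neg, zero_mul]
      have := j.isLt
      omega
  have hsumL : ∑ j : Fin n, (if (j:ℕ) + 1 = (i:ℕ) then (1:ℝ) else 0) * pv n k j =
      if 1 ≤ (i:ℕ) then pv n k ⟨(i:ℕ)-1, by omega⟩ else 0 := by
    by_cases h : 1 ≤ (i:ℕ)
    · rw [if_pos h, Finset.sum_eq_single (⟨(i:ℕ)-1, by omega⟩ : Fin n)]
      · rw [if_pos (by simp only [Fin.val_mk]; omega), one_mul]
      · intro b _ hb
        rw [if_neg, zero_mul]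
        intro hc
        apply hb; apply Fin.ext; simp only [Fin.val_mk]; omega
      · intro hmem; exact absurd (Finset.mem_univ _) hmem
    · rw [if_neg h]
      apply Finset.sum_eq_zero
      intro j _
      rw [if_neg, zero_mul]
      omega
  have hsumD : ∀ (P : Prop) [Decidable P],
      ∑ j : Fin n, (if i = j ∧ P then (1:ℝ) else 0) * pv n k j =
        if P then pv n k i else 0 := by
    intro P _
    by_cases hP : P
    · simp only [hP, and_true, if_pos]
      rw [Finset.sum_eq_single i]
      · rw [if_pos rfl, one_mul]
      · intro b _ hb
        rw [if_neg (fun hc => hb hc.symm), zero_mul]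
      · intro hmem; exact absurd (Finset.mem_univ _) hmem
    · simp [hP]
  rw [expand, hsumR, hsumL, hsumD, hsumD]
  have hvj : ∀ (j : Fin n), pv n k j = Real.cos ((2 * (j:ℝ) + 1) * a) := fun j => rfl
  simp only [Pi.smul_apply, smul_eq_mul, hvj, h2a]
  rcases Nat.eq_zero_or_pos (i:ℕ) with hi0 | hip
  · -- i = 0
    rw [dif_pos (by omega), if_neg (by omega), if_pos hi0, if_neg (by omega)]
    simp only [hi0]
    push_cast
    rw [show (2*(1:ℝ)+1) * a = a + 2*a by ring, show (2*(0:ℝ)+1) * a = a by ring]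
    have h2 := tkey a (2*a)
    rw [show a - 2*a = -a by ring, Real.cos_neg] at h2
    linarith
  · rcases Nat.lt_or_ge (i:ℕ) (n-1) with hilt | hige
    · -- interior
      rw [dif_pos (by omega), if_pos (show 1 ≤ (i:ℕ) by omega), if_neg (by omega), if_neg (by omega)]
      push_cast [Nat.cast_sub (show 1 ≤ (i:ℕ) by omega)]
      have h2 := tkey ((2*(i:ℝ)+1)*a) (2*a)
      rw [show (2*(i:ℝ)+1)*a + 2*a = (2*((i:ℝ)+1)+1)*a by ring,
        show (2*(i:ℝ)+1)*a - 2*a = (2*((i:ℝ)-1)+1)*a by ring] at h2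
      linarith
    · -- i = n - 1
      have hie : (i:ℕ) = n - 1 := by have := i.isLt; omega
      rw [dif_neg (by omega), if_pos (show 1 ≤ (i:ℕ) by omega), if_neg (by omega), if_pos hie]
      have hcast : (((i:ℕ) - 1 : ℕ) : ℝ) = (n:ℝ) - 2 := by
        push_cast [Nat.cast_sub (by omega : 1 ≤ (i:ℕ))]
        rw [hie]
        push_cast [Nat.cast_sub (by omega : 1 ≤ n)]
        ring
      have hcast2 : ((i:ℕ) : ℝ) = (n:ℝ) - 1 := by
        rw [hie]; push_cast [Nat.cast_sub (by omega : 1 ≤ n)]; ring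
      rw [hcast, hcast2]
      have h2 := tkey ((2*((n:ℝ)-1)+1)*a) (2*a)
      rw [show (2*((n:ℝ)-1)+1)*a + 2*a = (2*(n:ℝ)+1)*a by ring,
        show (2*((n:ℝ)-1)+1)*a - 2*a = (2*((n:ℝ)-2)+1)*a by ring] at h2
      have heq : Real.cos ((2*(n:ℝ)+1)*a) = Real.cos ((2*((n:ℝ)-1)+1)*a) := by
        rw [show (2*(n:ℝ)+1)*a = (k:ℝ)*π + a by rw [← h2na]; ring,
          show (2*((n:ℝ)-1)+1)*a = (k:ℝ)*π - a by rw [← h2na]; ring,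
          Real.cos_add, Real.cos_sub, Real.sin_nat_mul_pi]
        ring
      linarith

lemma pv_ne_zero (n k : ℕ) (hn : 2 ≤ n) (hk : k < n) : pv n k ≠ 0 := by
  have hn0 : (0:ℝ) < n := by positivity
  intro h
  have h0 : pv n k ⟨0, by omega⟩ = 0 := by rw [h]; rfl
  have : Real.cos ((2 * ((0:ℝ)) + 1) * ((k:ℝ) * π / (2 * n))) = 0 := by
    simpa [pv] using h0
  have hpos : 0 < Real.cos ((2 * ((0:ℝ)) + 1) * ((k:ℝ) * π / (2 * n))) := by
    apply Real.cos_pos_of_mem_Ioo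
    constructor
    · have : (0:ℝ) ≤ (k:ℝ) * π / (2 * n) := by positivity
      nlinarith [Real.pi_pos]
    · have hklt : (k:ℝ) < n := by exact_mod_cast hk
      rw [show (2 * ((0:ℝ)) + 1) * ((k:ℝ) * π / (2 * n)) = (k:ℝ) * π / (2 * n) by ring]
      rw [div_lt_iff₀ (by positivity)]
      nlinarith [Real.pi_pos]
  linarith

lemma charpoly_eval {n : ℕ} (M : Matrix (Fin n) (Fin n) ℝ) (t : ℝ) :
    M.charpoly.eval t = (Matrix.scalar (Fin n) t - M).det := by
  rw [Matrix.charpoly, _root_.eval_det, Matrix.matPolyEquiv_charmatrix, eval_sub, eval_X, eval_C]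

lemma hP_smul (n : ℕ) (hn : 2 ≤ n) :
    (Matrix.diagonal ((pathLoopA n 1 1).mulVec (fun _ => 1)))⁻¹ * pathLoopA n 1 1
      = (2⁻¹ : ℝ) • pathLoopA n 1 1 := by
  have hpv0 : pv n 0 = fun _ => (1:ℝ) := by
    funext j
    simp [pv]
  have hrow : (pathLoopA n 1 1).mulVec (fun _ => 1) = fun _ => (2:ℝ) := by
    have := pathLoopA_mulVec n 0 hn (by omega)
    rw [hpv0] at this
    simp only [Nat.cast_zero, zero_mul, zero_div, Real.cos_zero, mul_one] at this
    funext i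
    have := congrFun this i
    simpa using this
  rw [hrow]
  have hinv : (Matrix.diagonal (fun _ : Fin n => (2:ℝ)))⁻¹
      = Matrix.diagonal (fun _ : Fin n => (2⁻¹:ℝ)) := by
    apply Matrix.inv_eq_right_inv
    rw [Matrix.diagonal_mul_diagonal]
    norm_num
  rw [hinv, ← Matrix.smul_eq_diagonal_mul]

lemma P_eigen (n k : ℕ) (hn : 2 ≤ n) (hk : k < n) :
    ((2⁻¹ : ℝ) • pathLoopA n 1 1).mulVec (pv n k)
      = Real.cos ((k:ℝ) * π / n) • pv n k := by
  rw [Matrix.smul_mulVec, pathLoopA_mulVec n k hn hk, smul_smul]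
  congr 1
  ring

lemma charpoly_isRoot (n k : ℕ) (hn : 2 ≤ n) (hk : k < n) :
    ((2⁻¹ : ℝ) • pathLoopA n 1 1).charpoly.IsRoot (Real.cos ((k:ℝ) * π / n)) := by
  set t := Real.cos ((k:ℝ) * π / n)
  rw [IsRoot, charpoly_eval]
  rw [← Matrix.exists_mulVec_eq_zero_iff]
  refine ⟨pv n k, pv_ne_zero n k hn hk, ?_⟩
  rw [Matrix.sub_mulVec, Matrix.scalar_apply]
  funext i
  simp only [Matrix.mulVec_diagonal, Pi.sub_apply]
  have := congrFun (P_eigen n k hn hk) i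
  rw [this]
  simp [t]

lemma cos_pi_div_inj (n : ℕ) (hn : 2 ≤ n) (k1 k2 : ℕ) (h1 : k1 ≤ n) (h2 : k2 ≤ n)
    (hfe : Real.cos ((k1:ℝ) * π / n) = Real.cos ((k2:ℝ) * π / n)) : k1 = k2 := by
  have hn0 : (0:ℝ) < n := by positivity
  have m1 : ((k1:ℝ) * π / n) ∈ Set.Icc 0 π := by
    constructor
    · positivity
    · rw [div_le_iff₀ hn0]
      have : (k1:ℝ) ≤ n := by exact_mod_cast h1
      nlinarith [Real.pi_pos]
  have m2 : ((k2:ℝ) * π / n) ∈ Set.Icc 0 π := by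
    constructor
    · positivity
    · rw [div_le_iff₀ hn0]
      have : (k2:ℝ) ≤ n := by exact_mod_cast h2
      nlinarith [Real.pi_pos]
  have heq := Real.injOn_cos m1 m2 hfe
  have hπ := Real.pi_pos
  have hne : π / (n:ℝ) ≠ 0 := by positivity
  have hc : (k1:ℝ) = (k2:ℝ) := by
    have h3 : (k1:ℝ) * (π/n) = (k2:ℝ) * (π/n) := by
      rw [← mul_div_assoc, ← mul_div_assoc]; exact heq
    exact mul_right_cancel₀ hne h3
  exact_mod_cast hc

lemma charpoly_prod (n : ℕ) (hn : 2 ≤ n) :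
    ((2⁻¹ : ℝ) • pathLoopA n 1 1).charpoly
      = ∏ k ∈ Finset.range n, (X - C (Real.cos ((k:ℝ) * π / n))) := by
  classical
  set p := ((2⁻¹ : ℝ) • pathLoopA n 1 1).charpoly with hp
  set c := ∏ k ∈ Finset.range n, (X - C (Real.cos ((k:ℝ) * π / n))) with hc
  have hpmonic : p.Monic := Matrix.charpoly_monic _
  have hpdeg : p.natDegree = n := by
    rw [hp, Matrix.charpoly_natDegree_eq_dim, Fintype.card_fin]
  have hcmonic : c.Monic := monic_prod_of_monic _ _ (fun k _ => monic_X_sub_C _)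
  have hcdeg : c.natDegree = n := by
    rw [hc, natDegree_prod _ _ (fun k _ => X_sub_C_ne_zero _)]
    simp [natDegree_X_sub_C]
  have hdvd : c ∣ p := by
    apply Finset.prod_dvd_of_coprime
    · intro k1 hk1 k2 hk2 hne
      simp only [Function.onFun]
      apply Polynomial.isCoprime_X_sub_C_of_isUnit_sub
      apply isUnit_iff_ne_zero.2
      apply sub_ne_zero.2
      intro he
      exact hne (cos_pi_div_inj n hn k1 k2
        (le_of_lt (Finset.mem_range.1 (Finset.mem_coe.1 hk1)))
        (le_of_lt (Finset.mem_range.1 (Finset.mem_coe.1 hk2))) he)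
    · intro k hk
      exact dvd_iff_isRoot.2 (charpoly_isRoot n k hn (Finset.mem_range.1 hk))
  obtain ⟨u, hu⟩ := hdvd
  have hune : u ≠ 0 := by
    rintro rfl
    rw [mul_zero] at hu
    exact hpmonic.ne_zero hu
  have hudeg : u.natDegree = 0 := by
    have := natDegree_mul hcmonic.ne_zero hune
    rw [← hu, hpdeg, hcdeg] at this
    omega
  have humonic : u.Monic := by
    have := hpmonic.leadingCoeff
    rw [hu, leadingCoeff_mul, hcmonic.leadingCoeff, one_mul] at this
    exact this
  have : u = 1 := eq_one_of_monic_natDegree_zero humonic hudeg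
  rw [hu, this, mul_one]

end Aux

open Real in
/-- Kemeny's constant of the random walk on the path graph with
`n` vertices with a unit loop at both endpoints equals `(1/3)(n² - 1)`. -/
theorem kemeny_path_two_loops {n : ℕ} (hn : 2 ≤ n)
    (P : Matrix (Fin n) (Fin n) ℝ)
    (hP : P = (Matrix.diagonal ((pathLoopA n 1 1).mulVec (fun _ => 1)))⁻¹ *
      pathLoopA n 1 1) :
    kemeny P = (((1 / 3) * ((n : ℝ) ^ 2 - 1) : ℝ) : ℂ) := by
  classical
  rw [hP, hP_smul n hn]
  unfold kemeny
  set g : ℕ → ℂ := fun k => ((Real.cos ((k:ℝ) * π / n) : ℝ) : ℂ) with hg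
  have h1 : (((2⁻¹:ℝ) • pathLoopA n 1 1).map (fun x : ℝ => (x:ℂ))).charpoly
      = (((2⁻¹:ℝ) • pathLoopA n 1 1).charpoly).map (algebraMap ℝ ℂ) := by
    rw [← Matrix.charpoly_map]
    congr 1
  rw [h1, charpoly_prod n hn, Polynomial.map_prod]
  simp only [Polynomial.map_sub, map_X, map_C]
  have h2 : (∏ k ∈ Finset.range n, (X - C (algebraMap ℝ ℂ (Real.cos ((k:ℝ) * π / n)))))
      = (((Finset.range n).val.map g).map (fun z : ℂ => X - C z)).prod := by
    rw [Finset.prod_eq_multiset_prod, Multiset.map_map]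
    rfl
  rw [h2, roots_multiset_prod_X_sub_C]
  have h3 : ((Finset.range n).val.map g).filter (· ≠ 1)
      = ((Finset.Ioo 0 n).val.map g) := by
    rw [Multiset.filter_map]
    congr 1
    have : Multiset.filter ((· ≠ 1) ∘ g) (Finset.range n).val
        = (Finset.filter (fun k => g k ≠ 1) (Finset.range n)).val := by
      rw [Finset.filter_val]
      rfl
    rw [this]
    congr 1
    ext k
    simp only [Finset.mem_filter, Finset.mem_range, Finset.mem_Ioo]
    constructor
    · rintro ⟨hkn, hk1⟩
      refine ⟨?_, hkn⟩
      rcases Nat.eq_zero_or_pos k with rfl | h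
      · exfalso; apply hk1; simp [hg]
      · exact h
    · rintro ⟨hk0, hkn⟩
      refine ⟨hkn, ?_⟩
      intro hke
      have : Real.cos ((k:ℝ) * π / n) = 1 := by
        have h6 : ((Real.cos ((k:ℝ) * π / n) : ℝ) : ℂ) = 1 := hke
        exact_mod_cast h6
      have h0 : Real.cos ((k:ℝ) * π / n) = Real.cos (((0:ℕ):ℝ) * π / n) := by
        simp [this]
      have := cos_pi_div_inj n hn k 0 (by omega) (by omega) h0
      omega
  rw [h3, Multiset.map_map]
  have h4 : (((Finset.Ioo 0 n).val.map ((fun μ : ℂ => (1 - μ)⁻¹) ∘ g))).sum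
      = ∑ k ∈ Finset.Ioo 0 n, (1 - g k)⁻¹ := rfl
  rw [h4]
  have h5 : (∑ k ∈ Finset.Ioo 0 n, (1 - g k)⁻¹)
      = ((∑ k ∈ Finset.Ioo 0 n, (1 - Real.cos ((k:ℝ) * π / n))⁻¹ : ℝ) : ℂ) := by
    rw [hg]
    push_cast
    rfl
  rw [h5, cheb_sum n hn]
  norm_num
  ring_nf
end

section
/- Kemeny's constant of the random walk on the path graph with n vertices with a unit loop added at exactly one endpoint equals (1/3)n(n-1). -/
open Matrix Polynomial

section Trid
variable {R : Type*} [CommRing R]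

/-- Tridiagonal matrix with diagonal `e` and off-diagonal entries `-1`. -/
def trid (e : ℕ → R) (m : ℕ) : Matrix (Fin m) (Fin m) R :=
  Matrix.of fun i j => if (i:ℕ) = j then e i else if (i:ℕ) = (j:ℕ)+1 ∨ (j:ℕ) = (i:ℕ)+1 then -1 else 0

lemma trid_apply (e : ℕ → R) (m : ℕ) (i j : Fin m) : trid e m i j =
    if (i:ℕ) = j then (e i : R) else if (i:ℕ) = (j:ℕ)+1 ∨ (j:ℕ) = (i:ℕ)+1 then -1 else 0 := rfl

lemma coe_succAbove {m : ℕ} (j : Fin (m+1)) (k : Fin m) :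
    ((j.succAbove k) : ℕ) = if (k:ℕ) < (j:ℕ) then (k:ℕ) else (k:ℕ)+1 := by
  rw [Fin.succAbove]
  split_ifs with h1 h2 h2
  · rfl
  · exact absurd (Fin.lt_def.mp h1) h2
  · exact absurd (show k.castSucc < j from Fin.lt_def.mpr h2) h1
  · rfl

lemma trid_congr (e f : ℕ → R) (m : ℕ) (h : ∀ i < m, e i = f i) : trid e m = trid f m := by
  ext i j
  simp only [trid, of_apply]
  rw [h i i.isLt]

lemma det_trid_rec (e : ℕ → R) (m : ℕ) :
    (trid e (m+2)).det = e (m+1) * (trid e (m+1)).det - (trid e m).det := by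
  have key : ∀ (k : ℕ) (i j : Fin k) (a b : ℕ), (i:ℕ) = a → (j:ℕ) = b →
      trid e k i j = if a = b then e a else if a = b+1 ∨ b = a+1 then -1 else 0 := by
    intro k i j a b ha hb
    rw [trid_apply, ha, hb]
  have hcoecol : ∀ l : Fin (m+1),
      ((((Fin.last m).castSucc : Fin (m+2)).succAbove l : Fin (m+2)) : ℕ)
      = if (l:ℕ) < m then (l:ℕ) else (l:ℕ)+1 := by
    intro l
    rw [coe_succAbove, Fin.coe_castSucc, Fin.val_last]
  have hcoerow : ∀ k : Fin (m+1),
      (((Fin.last (m+1)).succAbove k : Fin (m+2)) : ℕ) = (k:ℕ)  := by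
    intro k
    rw [coe_succAbove, Fin.val_last, if_pos k.isLt]
  have hcoerow' : ∀ k : Fin m,
      (((Fin.last m).succAbove k : Fin (m+1)) : ℕ) = (k:ℕ)  := by
    intro k
    rw [coe_succAbove, Fin.val_last, if_pos k.isLt]
  have hS1 : (trid e (m+2)).submatrix (Fin.last (m+1)).succAbove (Fin.last (m+1)).succAbove
      = trid e (m+1) := by
    ext k l
    rw [submatrix_apply, key _ _ _ (k:ℕ) (l:ℕ) (hcoerow k) (hcoerow l), trid_apply]
  set B := (trid e (m+2)).submatrix (Fin.last (m+1)).succAbove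
      ((Fin.last m).castSucc : Fin (m+2)).succAbove with hB
  have hS2 : B.submatrix (Fin.last m).succAbove (Fin.last m).succAbove = trid e m := by
    ext k l
    simp only [hB, submatrix_apply]
    rw [key _ _ _ (k:ℕ) (l:ℕ) ((hcoerow _).trans (hcoerow' k))
      (by rw [hcoecol, hcoerow', if_pos l.isLt]), trid_apply]
  have hdetB : B.det = - (trid e m).det := by
    rw [det_succ_column B (Fin.last m)]
    rw [Fin.sum_univ_castSucc]
    have hzero : ∀ i : Fin m, (-1:R) ^ ((i.castSucc : ℕ) + (Fin.last m : ℕ)) *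
        B i.castSucc (Fin.last m) *
        (B.submatrix i.castSucc.succAbove (Fin.last m).succAbove).det = 0 := by
      intro i
      have hi : (i:ℕ) < m := i.isLt
      have : B i.castSucc (Fin.last m) = 0 := by
        simp only [hB, submatrix_apply]
        rw [key _ _ _ (i:ℕ) (m+1) ((hcoerow _).trans (Fin.coe_castSucc i))
          (by rw [hcoecol, Fin.val_last, if_neg (by omega)])]
        rw [if_neg (by omega), if_neg (by omega)]
      rw [this]; ring
    rw [Finset.sum_eq_zero (fun i _ => hzero i), zero_add]
    have hentry : B (Fin.last m) (Fin.last m) = -1 := by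
      simp only [hB, submatrix_apply]
      rw [key _ _ _ m (m+1) ((hcoerow _).trans (Fin.val_last _))
        (by rw [hcoecol, Fin.val_last, if_neg (by omega)])]
      rw [if_neg (by omega), if_pos (by omega)]
    rw [hentry, hS2]
    have : (-1:R) ^ ((Fin.last m : ℕ) + (Fin.last m : ℕ)) = 1 := by
      simp [Fin.val_last, ← two_mul, pow_mul]
    rw [this]; ring
  rw [det_succ_row (trid e (m+2)) (Fin.last (m+1))]
  rw [Fin.sum_univ_castSucc, Fin.sum_univ_castSucc]
  have hzero : ∀ j : Fin m, (-1:R) ^ ((Fin.last (m+1) : ℕ) + ((j.castSucc.castSucc : Fin (m+2)) : ℕ)) *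
      trid e (m+2) (Fin.last (m+1)) j.castSucc.castSucc *
      ((trid e (m+2)).submatrix (Fin.last (m+1)).succAbove (j.castSucc.castSucc : Fin (m+2)).succAbove).det = 0 := by
    intro j
    have hj : (j:ℕ) < m := j.isLt
    have : trid e (m+2) (Fin.last (m+1)) j.castSucc.castSucc = 0 := by
      rw [key _ _ _ (m+1) (j:ℕ) (Fin.val_last _) (by rw [Fin.coe_castSucc, Fin.coe_castSucc])]
      rw [if_neg (by omega), if_neg (by omega)]
    rw [this]; ring
  rw [Finset.sum_eq_zero (fun j _ => hzero j), zero_add]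
  have h1 : trid e (m+2) (Fin.last (m+1)) ((Fin.last m).castSucc) = -1 := by
    rw [key _ _ _ (m+1) m (Fin.val_last _) (by rw [Fin.coe_castSucc, Fin.val_last])]
    rw [if_neg (by omega), if_pos (by omega)]
  have h2 : trid e (m+2) (Fin.last (m+1)) (Fin.last (m+1)) = e (m+1) := by
    rw [key _ _ _ (m+1) (m+1) (Fin.val_last _) (Fin.val_last _)]
    rw [if_pos rfl]
  rw [h1, h2, hS1, ← hB, hdetB]
  have hs1 : (-1:R) ^ ((Fin.last (m+1) : ℕ) + ((Fin.last m).castSucc : ℕ)) = -1 := by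
    rw [Fin.val_last, Fin.coe_castSucc, Fin.val_last]
    have : (m+1) + m = 2*m+1 := by ring
    rw [this, pow_succ, pow_mul]
    simp
  have hs2 : (-1:R) ^ ((Fin.last (m+1) : ℕ) + (Fin.last (m+1) : ℕ)) = 1 := by
    rw [Fin.val_last, ← two_mul, pow_mul]
    simp
  rw [hs1, hs2]
  ring

end Trid

/-- The continuant polynomials of the path with a loop at the first vertex. -/
noncomputable def pp : ℕ → ℝ[X]
  | 0 => 1
  | 1 => 2*X - 1
  | (m+2) => 2*X*(pp (m+1)) - pp m

lemma pp_eval (m : ℕ) :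
    (eval 1 (pp m) = 1) ∧ (eval 1 (derivative (pp m)) = m*(m+1)) ∧
      (eval 1 (derivative (derivative (pp m))) = ((m:ℝ)-1)*m*((m:ℝ)+1)*((m:ℝ)+2)/3) := by
  induction m using Nat.twoStepInduction with
  | zero =>
      refine ⟨?_, ?_, ?_⟩ <;> norm_num [pp]
  | one =>
      have h : pp 1 = 2*X - 1 := rfl
      refine ⟨?_, ?_, ?_⟩ <;> rw [h] <;> simp [derivative_mul] <;> norm_num
  | more m ih2 ih1 =>
      obtain ⟨a1, a2, a3⟩ := ih1
      obtain ⟨b1, b2, b3⟩ := ih2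
      have hpp : pp (m+2) = 2*X*(pp (m+1)) - pp m := rfl
      have hd : derivative (pp (m+2)) = 2*(pp (m+1)) + 2*X*(derivative (pp (m+1)))
          - derivative (pp m) := by
        rw [hpp]
        simp only [derivative_sub, derivative_mul, derivative_ofNat, derivative_X]
        ring
      have hd2 : derivative (derivative (pp (m+2))) = 4*(derivative (pp (m+1)))
          + 2*X*(derivative (derivative (pp (m+1)))) - derivative (derivative (pp m)) := by
        rw [hd]
        simp only [derivative_sub, derivative_add, derivative_mul, derivative_ofNat,
          derivative_X]
        ring
      refine ⟨?_, ?_, ?_⟩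
      · rw [hpp]; simp only [eval_sub, eval_mul, eval_ofNat, eval_X, a1, b1]; norm_num
      · rw [hd]; simp only [eval_sub, eval_add, eval_mul, eval_ofNat, eval_X, a1, a2, b2]
        push_cast; ring
      · rw [hd2]; simp only [eval_sub, eval_add, eval_mul, eval_ofNat, eval_X, a2, a3, b3]
        push_cast; ring

/-- The diagonal sequence of the "interior" tridiagonal matrices. -/
noncomputable def dseq : ℕ → ℝ[X] := fun i => if i = 0 then 2*X - 1 else 2*X

lemma det_trid_pp : ∀ m : ℕ, (trid dseq m).det = pp m ∧ (trid dseq (m+1)).det = pp (m+1) := by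
  intro m
  induction m with
  | zero =>
      constructor
      · simp [pp]
      · rw [det_fin_one]
        show dseq 0 = pp 1
        simp [dseq, pp]
  | succ k ih =>
      obtain ⟨ih1, ih2⟩ := ih
      refine ⟨ih2, ?_⟩
      rw [det_trid_rec, ih1, ih2]
      show dseq (k+1) * _ - _ = pp (k+2)
      rw [show dseq (k+1) = 2*X from if_neg (by omega)]
      rfl

lemma rowsum {n : ℕ} (hn : 2 ≤ n) (i : Fin n) :
    (pathLoopA n 1 0).mulVec (fun _ => 1) i = if (i:ℕ) = n-1 then 1 else 2 := by
  have hi := i.isLt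
  simp only [Matrix.mulVec, dotProduct]
  simp only [pathLoopA, of_apply, mul_one, and_false, if_false, ite_self, add_zero]
  simp only [Fin.ext_iff]
  have hsplit : ∀ j : Fin n,
      (if (i:ℕ)+1 = (j:ℕ) ∨ (j:ℕ)+1 = (i:ℕ) then (1:ℝ) else 0)
        + (if (i:ℕ) = (j:ℕ) ∧ (i:ℕ) = 0 then (1:ℝ) else 0)
      = (if (i:ℕ)+1 = (j:ℕ) then (1:ℝ) else 0) + (if (j:ℕ)+1 = (i:ℕ) then (1:ℝ) else 0)
        + (if (i:ℕ) = (j:ℕ) ∧ (i:ℕ) = 0 then (1:ℝ) else 0) := by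
    intro j
    by_cases h1 : (i:ℕ)+1 = (j:ℕ) <;> by_cases h2 : (j:ℕ)+1 = (i:ℕ) <;>
      simp [h1, h2] <;> omega
  rw [Finset.sum_congr rfl (fun j _ => hsplit j)]
  rw [Finset.sum_add_distrib, Finset.sum_add_distrib]
  have e1 : ∑ j : Fin n, (if (i:ℕ)+1 = (j:ℕ) then (1:ℝ) else 0)
      = if (i:ℕ)+1 < n then 1 else 0 := by
    rw [Fin.sum_univ_eq_sum_range (fun t => if (i:ℕ)+1 = t then (1:ℝ) else 0) n]
    rw [Finset.sum_ite_eq (Finset.range n) ((i:ℕ)+1) (fun _ => (1:ℝ))]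
    simp [Finset.mem_range]
  have e2 : ∑ j : Fin n, (if (j:ℕ)+1 = (i:ℕ) then (1:ℝ) else 0)
      = if (i:ℕ) = 0 then 0 else 1 := by
    rw [Fin.sum_univ_eq_sum_range (fun t => if t+1 = (i:ℕ) then (1:ℝ) else 0) n]
    by_cases hi0 : (i:ℕ) = 0
    · rw [if_pos hi0]
      apply Finset.sum_eq_zero
      intro t _
      rw [if_neg (by omega)]
    · rw [if_neg hi0]
      have : ∀ t ∈ Finset.range n, (if t+1 = (i:ℕ) then (1:ℝ) else 0)
          = (if (i:ℕ)-1 = t then (1:ℝ) else 0) := by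
        intro t _
        by_cases h : t + 1 = (i:ℕ)
        · rw [if_pos h, if_pos (by omega)]
        · rw [if_neg h, if_neg (by omega)]
      rw [Finset.sum_congr rfl this,
        Finset.sum_ite_eq (Finset.range n) ((i:ℕ)-1) (fun _ => (1:ℝ))]
      rw [if_pos (Finset.mem_range.mpr (by omega))]
  have e3 : ∑ j : Fin n, (if (i:ℕ) = (j:ℕ) ∧ (i:ℕ) = 0 then (1:ℝ) else 0)
      = if (i:ℕ) = 0 then 1 else 0 := by
    rw [Fin.sum_univ_eq_sum_range (fun t => if (i:ℕ) = t ∧ (i:ℕ) = 0 then (1:ℝ) else 0) n]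
    by_cases hi0 : (i:ℕ) = 0
    · have : ∀ t ∈ Finset.range n, (if (i:ℕ) = t ∧ (i:ℕ) = 0 then (1:ℝ) else 0)
          = (if (i:ℕ) = t then (1:ℝ) else 0) := by
        intro t _; simp [hi0]
      rw [Finset.sum_congr rfl this,
        Finset.sum_ite_eq (Finset.range n) ((i:ℕ)) (fun _ => (1:ℝ))]
      rw [if_pos hi0, if_pos (Finset.mem_range.mpr (by omega))]
    · rw [if_neg hi0]
      apply Finset.sum_eq_zero
      intro t _
      simp [hi0]
  rw [e1, e2, e3]
  by_cases hlast : (i:ℕ) = n-1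
  · have h1 : ¬((i:ℕ)+1 < n) := by omega
    have h0 : ¬((i:ℕ) = 0) := by omega
    rw [if_pos hlast, if_neg h1, if_neg h0, if_neg h0]; norm_num
  · rw [if_neg hlast, if_pos (show (i:ℕ)+1 < n by omega)]
    by_cases hi0 : (i:ℕ) = 0
    · rw [if_pos hi0, if_pos hi0]; norm_num
    · rw [if_neg hi0, if_neg hi0]; norm_num

lemma sum_inv_one_sub : ∀ s : Multiset ℂ, (1:ℂ) ∉ s →
    eval 1 ((s.map fun a => X - C a).prod) ≠ 0 ∧
    (s.map fun μ => (1 - μ)⁻¹).sum =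
      eval 1 (derivative ((s.map fun a => X - C a).prod)) /
        eval 1 ((s.map fun a => X - C a).prod) := by
  intro s
  induction s using Multiset.induction with
  | empty => intro _; simp
  | cons a s ih =>
      intro hs
      have ha : a ≠ 1 := fun h => hs (h ▸ Multiset.mem_cons_self a s)
      have h1a : (1:ℂ) - a ≠ 0 := sub_ne_zero_of_ne (Ne.symm ha)
      obtain ⟨hne0, hsum⟩ := ih (fun h => hs (Multiset.mem_cons_of_mem h))
      simp only [Multiset.map_cons, Multiset.prod_cons, Multiset.sum_cons]
      have hder : derivative ((X - C a) * (s.map fun a => X - C a).prod)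
          = (s.map fun a => X - C a).prod + (X - C a) * derivative ((s.map fun a => X - C a).prod) := by
        rw [derivative_mul, derivative_sub, derivative_X, derivative_C, sub_zero, one_mul]
      rw [hder]
      simp only [eval_mul, eval_add, eval_sub, eval_X, eval_C]
      constructor
      · exact mul_ne_zero h1a hne0
      · rw [hsum]
        field_simp

/-- Kemeny's constant of the random walk on the path graph with
`n` vertices with a unit loop at exactly one endpoint equals `(1/3)n(n-1)`. -/
theorem kemeny_path_one_loop {n : ℕ} (hn : 2 ≤ n)
    (P : Matrix (Fin n) (Fin n) ℝ)
    (hP : P = (Matrix.diagonal ((pathLoopA n 1 0).mulVec (fun _ => 1)))⁻¹ *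
      pathLoopA n 1 0) :
    kemeny P = (((1 / 3) * (n : ℝ) * ((n : ℝ) - 1) : ℝ) : ℂ) := by
  obtain ⟨m, rfl⟩ : ∃ m, n = m + 2 := ⟨n - 2, by omega⟩
  set A := pathLoopA (m+2) 1 0 with hA
  set dvec : Fin (m+2) → ℝ := A.mulVec (fun _ => 1) with hdvec
  set D := Matrix.diagonal dvec with hD
  have hdv : ∀ i : Fin (m+2), dvec i = if (i:ℕ) = m+1 then 1 else 2 := by
    intro i
    have h21 : m+2-1 = m+1 := by omega
    exact (rowsum (by omega) i).trans (by rw [h21])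
  have hdn0 : ∀ i, dvec i ≠ 0 := by
    intro i
    rw [hdv i]
    split_ifs <;> norm_num
  have hdet : det D ≠ 0 := by
    rw [hD, det_diagonal]
    exact Finset.prod_ne_zero_iff.mpr (fun i _ => hdn0 i)
  have hDP : D * P = A := by
    rw [hP, ← Matrix.mul_assoc, Matrix.mul_nonsing_inv _ (isUnit_iff_ne_zero.mpr hdet),
      Matrix.one_mul]
  have hDPe : ∀ i j, dvec i * P i j = A i j := by
    intro i j
    have h := congrFun (congrFun hDP i) j
    rwa [hD, Matrix.diagonal_mul] at h
  have hAe : ∀ i j : Fin (m+2), A i j =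
      (if (i:ℕ)+1 = (j:ℕ) ∨ (j:ℕ)+1 = (i:ℕ) then (1:ℝ) else 0)
        + (if (i:ℕ) = (j:ℕ) ∧ (i:ℕ) = 0 then (1:ℝ) else 0) := by
    intro i j
    simp only [hA, pathLoopA, of_apply, ite_self, add_zero]
    congr 1
    by_cases h : i = j
    · subst h; simp
    · rw [if_neg (fun hc => h hc.1), if_neg (fun hc => h (Fin.ext hc.1))]
  set een : ℕ → ℝ[X] := fun i => if i = 0 then 2*X-1 else if i = m+1 then X else 2*X with heen
  have heenv : ∀ i : ℕ, een i = if i = 0 then 2*X-1 else if i = m+1 then X else 2*X :=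
    fun _ => rfl
  have hkey : (C : ℝ →+* ℝ[X]).mapMatrix D * charmatrix P = trid een (m+2) := by
    refine Matrix.ext (fun i j => ?_)
    rw [RingHom.mapMatrix_apply, hD, Matrix.diagonal_map (_root_.map_zero C), Matrix.diagonal_mul,
      trid_apply]
    by_cases hij : i = j
    · subst hij
      rw [charmatrix_apply_eq, if_pos rfl, mul_sub, ← C_mul, hDPe, hAe]
      rw [if_neg (by omega : ¬((i:ℕ)+1 = (i:ℕ) ∨ (i:ℕ)+1 = (i:ℕ))), zero_add, heenv]
      by_cases h0 : (i:ℕ) = 0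
      · rw [if_pos (⟨rfl, h0⟩ : (i:ℕ) = (i:ℕ) ∧ (i:ℕ) = 0), if_pos h0, hdv i,
          if_neg (by omega)]
        simp only [_root_.map_ofNat, _root_.map_one]
      · rw [if_neg (fun hc => h0 hc.2), if_neg h0, hdv i]
        by_cases h1 : (i:ℕ) = m+1
        · rw [if_pos h1, if_pos h1]
          simp only [_root_.map_one, _root_.map_zero, one_mul, sub_zero]
        · rw [if_neg h1, if_neg h1]
          simp only [_root_.map_ofNat, _root_.map_zero, sub_zero]
    · have hij' : ¬((i:ℕ) = (j:ℕ)) := fun hc => hij (Fin.ext hc)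
      rw [charmatrix_apply_ne _ _ _ hij, if_neg hij']
      have hcc : C (dvec i) * (-C (P i j)) = - C (dvec i * P i j) := by
        rw [C_mul]; ring
      rw [hcc, hDPe, hAe,
        if_neg (show ¬((i:ℕ) = (j:ℕ) ∧ (i:ℕ) = 0) from fun hc => hij' hc.1), add_zero]
      by_cases hnb : (i:ℕ) = (j:ℕ)+1 ∨ (j:ℕ) = (i:ℕ)+1
      · rw [if_pos (by omega : (i:ℕ)+1 = (j:ℕ) ∨ (j:ℕ)+1 = (i:ℕ)), if_pos hnb, _root_.map_one]
      · rw [if_neg (by omega : ¬((i:ℕ)+1 = (j:ℕ) ∨ (j:ℕ)+1 = (i:ℕ))), if_neg hnb,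
          _root_.map_zero, neg_zero]
  have hdetkey : C (det D) * (charpoly P) = X * pp (m+1) - pp m := by
    have h1 : det ((C : ℝ →+* ℝ[X]).mapMatrix D * charmatrix P) = C (det D) * charpoly P := by
      rw [det_mul, ← RingHom.map_det]
      rfl
    have h2 : det (trid een (m+2)) = X * pp (m+1) - pp m := by
      rw [det_trid_rec]
      have heq : ∀ k, k ≤ m+1 → trid een k = trid dseq k := by
        intro k hk
        apply trid_congr
        intro i hik
        rw [heenv, dseq]
        by_cases h0 : i = 0
        · rw [if_pos h0, if_pos h0]
        · rw [if_neg h0, if_neg (by omega), if_neg h0]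
      rw [heq (m+1) le_rfl, heq m (by omega), (det_trid_pp m).1, (det_trid_pp m).2]
      rw [show een (m+1) = X by rw [heenv]; simp]
    rw [← h1, hkey, h2]
  set Δ := det D with hΔdef
  set φr := charpoly P with hφr
  obtain ⟨p1, p2, p3⟩ := pp_eval m
  obtain ⟨q1, q2, q3⟩ := pp_eval (m+1)
  have heval0 : Δ * eval 1 φr = 0 := by
    have h := congrArg (eval 1) hdetkey
    simp only [eval_mul, eval_sub, eval_C, eval_X, p1, q1] at h
    linarith [h]
  have heval1 : Δ * eval 1 (derivative φr) = 2*(m:ℝ)+3 := by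
    have h := congrArg (fun p => eval 1 (derivative p)) hdetkey
    simp only [derivative_sub, derivative_mul, derivative_X, derivative_C, one_mul,
      eval_mul, eval_add, eval_sub, eval_C, eval_X, eval_zero, zero_mul, zero_add, add_zero,
      p1, p2, q1, q2] at h
    rw [h]; push_cast; ring
  have heval2 : Δ * eval 1 (derivative (derivative φr))
      = 2*((m:ℝ)+1)*((m:ℝ)+2)*(2*(m:ℝ)+3)/3 := by
    have h := congrArg (fun p => eval 1 (derivative (derivative p))) hdetkey
    simp only [derivative_sub, derivative_mul, derivative_X, derivative_C, derivative_zero,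
      derivative_add, derivative_one, one_mul, eval_mul, eval_add, eval_sub, eval_C, eval_X,
      eval_zero, zero_mul, zero_add, add_zero, p1, p2, p3, q1, q2, q3] at h
    rw [h]; push_cast; ring
  set a1 := eval 1 (derivative φr) with ha1
  set a2 := eval 1 (derivative (derivative φr)) with ha2
  have ha0z : eval 1 φr = 0 := by
    rcases mul_eq_zero.mp heval0 with h | h
    · exact absurd h hdet
    · exact h
  have h2m3 : (2*(m:ℝ)+3) ≠ 0 := by positivity
  have ha1ne : a1 ≠ 0 := by
    intro h
    rw [h, mul_zero] at heval1
    exact h2m3 heval1.symm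
  -- pass to ℂ
  set φ := (P.map (fun x : ℝ => (x : ℂ))).charpoly with hφdef
  have hφmap : φ = φr.map (Complex.ofRealHom) := by
    rw [hφdef, hφr]
    exact Matrix.charpoly_map P Complex.ofRealHom
  have hev : ∀ g : ℝ[X], eval 1 (g.map Complex.ofRealHom) = ((eval 1 g : ℝ) : ℂ) := by
    intro g
    rw [eval_map, eval₂_at_one]
    rfl
  have hφ0 : eval 1 φ = 0 := by
    rw [hφmap, hev, ha0z, Complex.ofReal_zero]
  have hφ1 : eval 1 (derivative φ) = ((a1 : ℝ) : ℂ) := by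
    rw [hφmap, derivative_map, hev]
  have hφ2 : eval 1 (derivative (derivative φ)) = ((a2 : ℝ) : ℂ) := by
    rw [hφmap, derivative_map, derivative_map, hev]
  have hmonic : φ.Monic := Matrix.charpoly_monic _
  have hne : φ ≠ 0 := hmonic.ne_zero
  have hsplits : φ = (φ.roots.map fun a => X - C a).prod :=
    (IsAlgClosed.splits φ).eq_prod_roots_of_monic hmonic
  have hroot1 : (1:ℂ) ∈ φ.roots := by
    rw [mem_roots hne]
    exact hφ0
  obtain ⟨s, hs⟩ := Multiset.exists_cons_of_mem hroot1
  set ψ := (s.map fun a => X - C a).prod with hψdef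
  have hfact : φ = (X - C 1) * ψ := by
    conv_lhs => rw [hsplits]
    rw [hs, Multiset.map_cons, Multiset.prod_cons]
  have hderφ : derivative φ = ψ + (X - C 1) * derivative ψ := by
    rw [hfact, derivative_mul, derivative_sub, derivative_X, derivative_C, sub_zero, one_mul]
  have hψ1 : eval 1 ψ = ((a1 : ℝ) : ℂ) := by
    have h := congrArg (eval 1) hderφ
    simp only [eval_add, eval_mul, eval_sub, eval_X, eval_C, sub_self, zero_mul, add_zero] at h
    rw [← h, hφ1]
  have hψ1ne : eval 1 ψ ≠ 0 := by
    rw [hψ1]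
    exact Complex.ofReal_ne_zero.mpr ha1ne
  have h1nots : (1:ℂ) ∉ s := by
    intro hmem
    obtain ⟨t, ht⟩ := Multiset.exists_cons_of_mem hmem
    apply hψ1ne
    rw [hψdef, ht, Multiset.map_cons, Multiset.prod_cons]
    simp
  have hψ'1 : 2 * eval 1 (derivative ψ) = ((a2 : ℝ) : ℂ) := by
    have hd2 : derivative (derivative φ)
        = 2 * derivative ψ + (X - C 1) * derivative (derivative ψ) := by
      rw [hderφ, derivative_add, derivative_mul, derivative_sub, derivative_X, derivative_C,
        sub_zero, one_mul]
      ring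
    have h := congrArg (eval 1) hd2
    simp only [eval_add, eval_mul, eval_sub, eval_X, eval_C, eval_ofNat, sub_self, zero_mul,
      add_zero] at h
    rw [← h, hφ2]
  have hfilter : φ.roots.filter (· ≠ 1) = s := by
    rw [hs, Multiset.filter_cons_of_neg _ (by simp)]
    exact Multiset.filter_eq_self.mpr (fun a ha => fun hc => h1nots (hc ▸ ha))
  obtain ⟨_, hsum⟩ := sum_inv_one_sub s h1nots
  have hkem : kemeny P = eval 1 (derivative ψ) / eval 1 ψ := by
    rw [kemeny, ← hφdef, hfilter, hψdef]
    exact hsum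
  -- final computation
  have hrel : a2 * (2*(m:ℝ)+3) = (2*((m:ℝ)+1)*((m:ℝ)+2)/3) * a1 * (2*(m:ℝ)+3) := by
    apply mul_left_cancel₀ hdet
    linear_combination (2*(m:ℝ)+3) * heval2
      - (2*((m:ℝ)+1)*((m:ℝ)+2)/3 * (2*(m:ℝ)+3)) * heval1
  have ha2rel : a2 = 2*((m:ℝ)+1)*((m:ℝ)+2)/3 * a1 := mul_right_cancel₀ h2m3 hrel
  have hψ'val : eval 1 (derivative ψ) = ((a2 : ℝ) : ℂ)/2 := by
    rw [← hψ'1]; ring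
  rw [hkem, hψ'val, hψ1, ha2rel]
  have ha1c : ((a1:ℝ):ℂ) ≠ 0 := Complex.ofReal_ne_zero.mpr ha1ne
  push_cast
  field_simp
  ring
end

section
/- For the path graph on n vertices (no loops), the centrality of the edge e = (m, m+1), defined as c(e) = κ(G) - κ(Ĝ₁) - κ(Ĝ₂) where Ĝ₁ and Ĝ₂ are the two paths of lengths m and n-m with a unit loop at the endpoint adjacent to the removed edge, equals (1/3)(2m(n-m) - n + 3/2). -/
open Matrix Polynomial

def triM (R : Type) [CommRing R] (n : ℕ) (d : ℕ → R) : Matrix (Fin n) (Fin n) R :=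
  Matrix.of fun i j =>
    if (i : ℕ) = j then d i
    else if (i : ℕ) + 1 = j ∨ (j : ℕ) + 1 = i then -1 else 0

variable {R : Type} [CommRing R]

lemma triM_det_zero (d : ℕ → R) : (triM R 0 d).det = 1 := Matrix.det_fin_zero

lemma triM_det_one (d : ℕ → R) : (triM R 1 d).det = d 0 := by
  rw [Matrix.det_fin_one]; rfl

lemma triM_entry_eq (n : ℕ) (d : ℕ → R) (i j : Fin n) (i' j' : ℕ) (hi : (i:ℕ) = i') (hj : (j:ℕ) = j') :
    triM R n d i j = if i' = j' then d i' else if i' + 1 = j' ∨ j' + 1 = i' then -1 else 0 := by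
  subst hi; subst hj; rfl

lemma succAbove_one_succ {n : ℕ} (j : Fin n) :
    (((1 : Fin (n+2)).succAbove j.succ : Fin (n+2)) : ℕ) = (j:ℕ) + 2 := by
  rw [Fin.succAbove, if_neg]
  · simp
  · simp [Fin.lt_def]

lemma triM_det_rec (n : ℕ) (d : ℕ → R) :
    (triM R (n+2) d).det
      = d 0 * (triM R (n+1) (fun i => d (i+1))).det
        - (triM R n (fun i => d (i+2))).det := by
  rw [show ((n:ℕ)+2) = (n+1).succ from rfl, Matrix.det_succ_row_zero]
  rw [Fin.sum_univ_succ, Fin.sum_univ_succ]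
  simp only [Fin.succ_zero_eq_one]
  have h00 : triM R (n+2) d 0 0 = d 0 := by simp [triM]
  have h01 : triM R (n+2) d 0 1 = -1 := by
    rw [triM_entry_eq (n+2) d _ _ 0 1 rfl rfl]; norm_num
  have hrest : ∀ j : Fin n, triM R (n+2) d 0 j.succ.succ = 0 := by
    intro j
    rw [triM_entry_eq (n+2) d _ _ 0 ((j:ℕ)+2) rfl (by simp)]
    rw [if_neg (by omega), if_neg (by omega)]
  simp only [hrest, mul_zero, zero_mul, Finset.sum_const_zero, add_zero, h00, h01]
  -- first submatrix
  have hsub0 : (triM R (n+2) d).submatrix Fin.succ ((0 : Fin (n+2)).succAbove)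
      = triM R (n+1) (fun i => d (i+1)) := by
    rw [Fin.succAbove_zero]
    ext i j
    rw [Matrix.submatrix_apply,
      triM_entry_eq (n+2) d _ _ ((i:ℕ)+1) ((j:ℕ)+1) (by simp) (by simp),
      triM_entry_eq (n+1) _ i j i j rfl rfl]
    by_cases h1 : (i:ℕ) = (j:ℕ)
    · rw [if_pos (by omega), if_pos h1]
    · rw [if_neg (by omega), if_neg h1]
      by_cases h2 : (i:ℕ)+1 = j ∨ (j:ℕ)+1 = i
      · rw [if_pos (by omega), if_pos h2]
      · rw [if_neg (by omega), if_neg h2]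
  -- second submatrix: expand along first column
  have hsub1 : ((triM R (n+2) d).submatrix Fin.succ ((1 : Fin (n+2)).succAbove)).det
      = - (triM R n (fun i => d (i+2))).det := by
    rw [Matrix.det_succ_column_zero, Fin.sum_univ_succ]
    have hc0 : (triM R (n+2) d).submatrix Fin.succ ((1 : Fin (n+2)).succAbove) 0 0 = -1 := by
      rw [Matrix.submatrix_apply]
      rw [triM_entry_eq (n+2) d _ _ 1 0 (by simp) (by simp [Fin.succAbove])]
      norm_num
    have hcrest : ∀ i : Fin n,
        (triM R (n+2) d).submatrix Fin.succ ((1 : Fin (n+2)).succAbove) i.succ 0 = 0 := by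
      intro i
      rw [Matrix.submatrix_apply]
      rw [triM_entry_eq (n+2) d _ _ ((i:ℕ)+2) 0 (by simp) (by simp [Fin.succAbove])]
      rw [if_neg (by omega), if_neg (by omega)]
    simp only [hcrest, mul_zero, zero_mul, Finset.sum_const_zero, add_zero, hc0]
    have hsub2 : ((triM R (n+2) d).submatrix Fin.succ ((1 : Fin (n+2)).succAbove)).submatrix
        ((0 : Fin (n+1)).succAbove) Fin.succ = triM R n (fun i => d (i+2)) := by
      rw [Fin.succAbove_zero]
      ext i j
      rw [Matrix.submatrix_apply, Matrix.submatrix_apply,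
        triM_entry_eq (n+2) d _ _ ((i:ℕ)+2) ((j:ℕ)+2) (by simp) (succAbove_one_succ j),
        triM_entry_eq n _ i j i j rfl rfl]
      by_cases h1 : (i:ℕ) = (j:ℕ)
      · rw [if_pos (by omega), if_pos h1]
      · rw [if_neg (by omega), if_neg h1]
        by_cases h2 : (i:ℕ)+1 = j ∨ (j:ℕ)+1 = i
        · rw [if_pos (by omega), if_pos h2]
        · rw [if_neg (by omega), if_neg h2]
    rw [hsub2]
    norm_num
  rw [hsub0, hsub1]
  norm_num
  ring

noncomputable def cheb : ℕ → Polynomial ℝ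
  | 0 => 1
  | 1 => X
  | (k+2) => 2*X*cheb (k+1) - cheb k

noncomputable def vseq : ℕ → Polynomial ℝ
  | 0 => 1
  | 1 => 2*X - 1
  | (k+2) => 2*X*vseq (k+1) - vseq k

lemma cheb_e : ∀ k, (cheb k).eval 1 = 1 := by
  intro k
  induction k using Nat.strong_induction_on with
  | _ k ih =>
    match k with
    | 0 => simp [cheb]
    | 1 => simp [cheb]
    | (k+2) =>
      rw [show cheb (k+2) = 2*X*cheb (k+1) - cheb k from rfl]
      simp [ih (k+1) (by omega), ih k (by omega)]
      norm_num

lemma cheb_d1 : ∀ k, ((cheb k).derivative).eval 1 = (k:ℝ)^2 := by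
  intro k
  induction k using Nat.strong_induction_on with
  | _ k ih =>
    match k with
    | 0 => simp [cheb]
    | 1 => simp [cheb]
    | (k+2) =>
      rw [show cheb (k+2) = 2*X*cheb (k+1) - cheb k from rfl]
      simp [derivative_mul, ih (k+1) (by omega), ih k (by omega), cheb_e]
      push_cast
      ring

lemma cheb_d2 : ∀ k, ((cheb k).derivative.derivative).eval 1
    = (k:ℝ)^2 * ((k:ℝ)^2 - 1) / 3 := by
  intro k
  induction k using Nat.strong_induction_on with
  | _ k ih =>
    match k with
    | 0 => simp [cheb]
    | 1 => simp [cheb]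
    | (k+2) =>
      rw [show cheb (k+2) = 2*X*cheb (k+1) - cheb k from rfl]
      simp [derivative_mul, ih (k+1) (by omega), ih k (by omega), cheb_d1]
      push_cast
      ring

lemma vseq_e : ∀ k, (vseq k).eval 1 = 1 := by
  intro k
  induction k using Nat.strong_induction_on with
  | _ k ih =>
    match k with
    | 0 => simp [vseq]
    | 1 => norm_num [vseq]
    | (k+2) =>
      rw [show vseq (k+2) = 2*X*vseq (k+1) - vseq k from rfl]
      simp [ih (k+1) (by omega), ih k (by omega)]
      norm_num

lemma vseq_d1 : ∀ k, ((vseq k).derivative).eval 1 = (k:ℝ)*((k:ℝ)+1) := by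
  intro k
  induction k using Nat.strong_induction_on with
  | _ k ih =>
    match k with
    | 0 => simp [vseq]
    | 1 => norm_num [vseq]
    | (k+2) =>
      rw [show vseq (k+2) = 2*X*vseq (k+1) - vseq k from rfl]
      simp [derivative_mul, ih (k+1) (by omega), ih k (by omega), vseq_e]
      push_cast
      ring

lemma vseq_d2 : ∀ k, ((vseq k).derivative.derivative).eval 1
    = ((k:ℝ)+1)*(k:ℝ)*((k:ℝ)+2)*((k:ℝ)-1) / 3 := by
  intro k
  induction k using Nat.strong_induction_on with
  | _ k ih =>
    match k with
    | 0 => simp [vseq]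
    | 1 => norm_num [vseq]
    | (k+2) =>
      rw [show vseq (k+2) = 2*X*vseq (k+1) - vseq k from rfl]
      simp [derivative_mul, ih (k+1) (by omega), ih k (by omega), vseq_d1]
      push_cast
      ring


lemma cheb_zero : cheb 0 = 1 := rfl
lemma cheb_one : cheb 1 = X := rfl
lemma cheb_rec (k : ℕ) : cheb (k+2) = 2*X*cheb (k+1) - cheb k := rfl
lemma vseq_zero : vseq 0 = 1 := rfl
lemma vseq_one : vseq 1 = 2*X - 1 := rfl
lemma vseq_rec (k : ℕ) : vseq (k+2) = 2*X*vseq (k+1) - vseq k := rfl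

lemma triM_congr (n : ℕ) (d d' : ℕ → R) (h : ∀ i < n, d i = d' i) :
    triM R n d = triM R n d' := by
  ext i j
  simp only [triM, Matrix.of_apply]
  by_cases hij : (i:ℕ) = j
  · rw [if_pos hij, if_pos hij, h i i.isLt]
  · rw [if_neg hij, if_neg hij]

noncomputable def sdiag (r : ℕ) : ℕ → ℝ[X] := fun i => if i = r-1 then X else 2*X
noncomputable def vdiag (r : ℕ) : ℕ → ℝ[X] := fun i => if i = r-1 then 2*X-1 else 2*X

lemma sdet : ∀ r, (triM ℝ[X] r (sdiag r)).det = cheb r := by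
  intro r
  induction r using Nat.strong_induction_on with
  | _ r ih =>
    match r with
    | 0 => rw [triM_det_zero, cheb_zero]
    | 1 => rw [triM_det_one, cheb_one]; simp [sdiag]
    | (r+2) =>
      rw [triM_det_rec, cheb_rec,
        triM_congr (r+1) _ (sdiag (r+1)) (by
          intro i hi; simp only [sdiag]; split_ifs <;> first | rfl | omega),
        triM_congr r _ (sdiag r) (by
          intro i hi; simp only [sdiag]; split_ifs <;> first | rfl | omega),
        ih (r+1) (by omega), ih r (by omega)]
      have : sdiag (r+2) 0 = 2*X := by simp only [sdiag]; rw [if_neg (by omega)]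
      rw [this]
    
lemma vdet : ∀ r, (triM ℝ[X] r (vdiag r)).det = vseq r := by
  intro r
  induction r using Nat.strong_induction_on with
  | _ r ih =>
    match r with
    | 0 => rw [triM_det_zero, vseq_zero]
    | 1 => rw [triM_det_one, vseq_one]; simp [vdiag]
    | (r+2) =>
      rw [triM_det_rec, vseq_rec,
        triM_congr (r+1) _ (vdiag (r+1)) (by
          intro i hi; simp only [vdiag]; split_ifs <;> first | rfl | omega),
        triM_congr r _ (vdiag r) (by
          intro i hi; simp only [vdiag]; split_ifs <;> first | rfl | omega),
        ih (r+1) (by omega), ih r (by omega)]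
      have : vdiag (r+2) 0 = 2*X := by simp only [vdiag]; rw [if_neg (by omega)]
      rw [this]

noncomputable def dG (n : ℕ) : ℕ → ℝ[X] := fun i => if i = 0 ∨ i = n-1 then X else 2*X
noncomputable def dH1 (m : ℕ) : ℕ → ℝ[X] :=
  fun i => (if i = 0 then X else 2*X) - (if i = m-1 then 1 else 0)
noncomputable def dH2 (k : ℕ) : ℕ → ℝ[X] :=
  fun i => (if i = k-1 then X else 2*X) - (if i = 0 then 1 else 0)

lemma fG_det (n : ℕ) (hn : 2 ≤ n) :
    (triM ℝ[X] n (dG n)).det = X * cheb (n-1) - cheb (n-2) := by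
  obtain ⟨k, rfl⟩ : ∃ k, n = k + 2 := ⟨n - 2, by omega⟩
  rw [triM_det_rec,
    triM_congr (k+1) _ (sdiag (k+1)) (by
      intro i hi
      unfold dG sdiag
      by_cases h : i = k
      · rw [if_pos (Or.inr (by omega)), if_pos (by omega)]
      · rw [if_neg (by omega), if_neg (by omega)]),
    triM_congr k _ (sdiag k) (by
      intro i hi
      unfold dG sdiag
      by_cases h : i = k - 1
      · rw [if_pos (Or.inr (by omega)), if_pos (by omega)]
      · rw [if_neg (by omega), if_neg (by omega)]),
    sdet, sdet]
  have h0 : dG (k+2) 0 = X := by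
    unfold dG; rw [if_pos (Or.inl rfl)]
  rw [h0]
  rfl

lemma fH1_det (m : ℕ) (hm : 2 ≤ m) :
    (triM ℝ[X] m (dH1 m)).det = X * vseq (m-1) - vseq (m-2) := by
  obtain ⟨k, rfl⟩ : ∃ k, m = k + 2 := ⟨m - 2, by omega⟩
  rw [triM_det_rec,
    triM_congr (k+1) _ (vdiag (k+1)) (by
      intro i hi
      unfold dH1 vdiag
      by_cases h : i = k
      · rw [if_neg (by omega), if_pos (by omega), if_pos (by omega)]
      · rw [if_neg (by omega), if_neg (by omega), if_neg (by omega), sub_zero]),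
    triM_congr k _ (vdiag k) (by
      intro i hi
      unfold dH1 vdiag
      by_cases h : i = k - 1
      · rw [if_neg (by omega), if_pos (by omega), if_pos (by omega)]
      · rw [if_neg (by omega), if_neg (by omega), if_neg (by omega), sub_zero]),
    vdet, vdet]
  have h0 : dH1 (k+2) 0 = X := by
    unfold dH1; rw [if_pos rfl, if_neg (by omega), sub_zero]
  rw [h0]
  rfl

lemma fH1_det_one : (triM ℝ[X] 1 (dH1 1)).det = X - 1 := by
  rw [triM_det_one]
  unfold dH1
  rw [if_pos rfl, if_pos rfl]

lemma fH2_det (k : ℕ) (hk : 2 ≤ k) :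
    (triM ℝ[X] k (dH2 k)).det = (2*X-1) * cheb (k-1) - cheb (k-2) := by
  obtain ⟨r, rfl⟩ : ∃ r, k = r + 2 := ⟨k - 2, by omega⟩
  rw [triM_det_rec,
    triM_congr (r+1) _ (sdiag (r+1)) (by
      intro i hi
      unfold dH2 sdiag
      by_cases h : i = r
      · rw [if_pos (by omega), if_neg (by omega), sub_zero, if_pos (by omega)]
      · rw [if_neg (by omega), if_neg (by omega), sub_zero, if_neg (by omega)]),
    triM_congr r _ (sdiag r) (by
      intro i hi
      unfold dH2 sdiag
      by_cases h : i = r - 1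
      · rw [if_pos (by omega), if_neg (by omega), sub_zero, if_pos (by omega)]
      · rw [if_neg (by omega), if_neg (by omega), sub_zero, if_neg (by omega)]),
    sdet, sdet]
  have h0 : dH2 (r+2) 0 = 2*X - 1 := by
    unfold dH2; rw [if_neg (by omega), if_pos rfl]
  rw [h0]
  rfl

lemma fH2_det_one : (triM ℝ[X] 1 (dH2 1)).det = X - 1 := by
  rw [triM_det_one]
  unfold dH2
  rw [if_pos rfl, if_pos rfl]

lemma logderiv : ∀ d (p : ℂ[X]), p.natDegree = d → p ≠ 0 → p.eval 1 ≠ 0 →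
    ((p.roots.map (fun μ => (1 - μ)⁻¹)).sum) = p.derivative.eval 1 / p.eval 1 := by
  intro d
  induction d using Nat.strong_induction_on with
  | _ d ih =>
    intro p hdeg hp h1
    by_cases hr : p.roots = 0
    · have hsplit : Splits p := IsAlgClosed.splits p
      have hd0 : p.natDegree = 0 := by
        rw [hsplit.natDegree_eq_card_roots, hr]
        rfl
      have hC := Polynomial.eq_C_of_natDegree_eq_zero hd0
      rw [hr, hC]
      simp
    · obtain ⟨μ, hμ⟩ := Multiset.exists_mem_of_ne_zero hr
      have hroot : p.IsRoot μ := Polynomial.isRoot_of_mem_roots hμ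
      obtain ⟨q, hq⟩ := Polynomial.dvd_iff_isRoot.mpr hroot
      have hXm : (X - C μ : ℂ[X]) ≠ 0 := Polynomial.X_sub_C_ne_zero μ
      have hq0 : q ≠ 0 := by rintro rfl; rw [mul_zero] at hq; exact hp hq
      have hev : p.eval 1 = (1 - μ) * q.eval 1 := by rw [hq]; simp
      have h1μ : (1:ℂ) - μ ≠ 0 := fun h => h1 (by rw [hev, h, zero_mul])
      have hq1 : q.eval 1 ≠ 0 := fun h => h1 (by rw [hev, h, mul_zero])
      have hqdeg : q.natDegree < d := by
        have : p.natDegree = 1 + q.natDegree := by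
          rw [hq, Polynomial.natDegree_mul hXm hq0, Polynomial.natDegree_X_sub_C]
        omega
      have hroots : p.roots = μ ::ₘ q.roots := by
        rw [hq, Polynomial.roots_mul (hq ▸ hp), Polynomial.roots_X_sub_C,
          Multiset.singleton_add]
      have hder : p.derivative.eval 1 = q.eval 1 + (1 - μ) * q.derivative.eval 1 := by
        rw [hq, Polynomial.derivative_mul]
        simp
      rw [hroots, Multiset.map_cons, Multiset.sum_cons,
        ih q.natDegree hqdeg q rfl hq0 hq1, hder, hev]
      field_simp

lemma kemeny_eq {N : ℕ} (D A : Matrix (Fin N) (Fin N) ℝ) (hD : IsUnit D.det)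
    (f : ℝ[X]) (hf : ((X : ℝ[X]) • D.map ⇑(C : ℝ →+* ℝ[X]) - A.map ⇑(C : ℝ →+* ℝ[X])).det = f)
    (h1 : f.eval 1 = 0) (h2 : f.derivative.eval 1 ≠ 0) :
    kemeny (D⁻¹ * A)
      = (((f.derivative.derivative.eval 1 / (2 * f.derivative.eval 1)) : ℝ) : ℂ) := by
  classical
  set P := D⁻¹ * A with hP
  -- step 1 : C D.det * charpoly P = f
  have hmm : D.map ⇑(C : ℝ →+* ℝ[X]) * Matrix.charmatrix P
      = (X : ℝ[X]) • D.map ⇑(C : ℝ →+* ℝ[X]) - A.map ⇑(C : ℝ →+* ℝ[X]) := by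
    rw [Matrix.charmatrix, Matrix.mul_sub]
    congr 1
    · rw [← (Matrix.scalar_commute (X : ℝ[X]) (fun r' => mul_comm _ r') _).eq,
        Matrix.scalar, smul_eq_diagonal_mul]
      rfl
    · show D.map _ * (RingHom.mapMatrix (C : ℝ →+* ℝ[X])) P = _
      rw [RingHom.mapMatrix_apply, ← Matrix.map_mul, hP, ← mul_assoc,
        Matrix.mul_nonsing_inv _ hD, one_mul]
  have hch : C D.det * P.charpoly = f := by
    rw [← hf, ← hmm, Matrix.det_mul, Matrix.charpoly, RingHom.map_det]
    rfl
  -- step 2: over ℂ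
  set c : ℝ →+* ℂ := Complex.ofRealHom with hc
  have hmap : (P.map (fun x : ℝ => (x : ℂ))).charpoly = P.charpoly.map c := by
    exact Matrix.charpoly_map P c
  have hdet0 : (D.det : ℝ) ≠ 0 := hD.ne_zero
  have hrootseq : (P.map (fun x : ℝ => (x : ℂ))).charpoly.roots = (f.map c).roots := by
    rw [hmap, ← hch, Polynomial.map_mul, Polynomial.map_C,
      Polynomial.roots_C_mul _ (by simpa using hdet0)]
  set fc : ℂ[X] := f.map c with hfc
  have heval : ∀ (g : ℝ[X]), (g.map c).eval 1 = ((g.eval 1 : ℝ) : ℂ) := by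
    intro g
    rw [show (1:ℂ) = c 1 by simp, Polynomial.eval_map, Polynomial.eval₂_at_apply]
    rfl
  have hfc1 : fc.eval 1 = 0 := by rw [hfc, heval, h1]; simp
  have hfcd1 : fc.derivative.eval 1 = ((f.derivative.eval 1 : ℝ) : ℂ) := by
    rw [hfc, Polynomial.derivative_map, heval]
  have hfcd2 : fc.derivative.derivative.eval 1
      = ((f.derivative.derivative.eval 1 : ℝ) : ℂ) := by
    rw [hfc, Polynomial.derivative_map, Polynomial.derivative_map, heval]
  have hfcd1ne : fc.derivative.eval 1 ≠ 0 := by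
    rw [hfcd1]; simpa using h2
  have hfcne : fc ≠ 0 := by
    rintro h; rw [h] at hfcd1ne; simp at hfcd1ne
  -- factor out (X - 1)
  set g : ℂ[X] := fc /ₘ (X - C 1) with hg
  have hfac : (X - C 1) * g = fc :=
    (Polynomial.mul_divByMonic_eq_iff_isRoot).mpr hfc1
  have hgne : g ≠ 0 := by rintro h; rw [h, mul_zero] at hfac; exact hfcne hfac.symm
  have hfcder : fc.derivative = g + (X - C 1) * g.derivative := by
    rw [← hfac, Polynomial.derivative_mul]
    simp
  have hg1 : g.eval 1 = fc.derivative.eval 1 := by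
    rw [hfcder]; simp
  have hg1ne : g.eval 1 ≠ 0 := by rw [hg1]; exact hfcd1ne
  have hgd1 : (2:ℂ) * g.derivative.eval 1 = fc.derivative.derivative.eval 1 := by
    rw [hfcder, Polynomial.derivative_add, Polynomial.derivative_mul]
    simp
    ring
  have hroots2 : fc.roots = 1 ::ₘ g.roots := by
    rw [← hfac, Polynomial.roots_mul (hfac.symm ▸ hfcne), Polynomial.roots_X_sub_C,
      Multiset.singleton_add]
  -- assemble
  rw [kemeny, hrootseq]
  rw [show (f.map c).roots = fc.roots from rfl, hroots2,
    Multiset.filter_cons_of_neg _ (by simp),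
    Multiset.filter_eq_self.mpr (by
      intro a ha h
      subst h
      exact hg1ne ((Polynomial.mem_roots hgne).mp ha)),
    logderiv g.natDegree g rfl hgne hg1ne, hg1]
  have hFne : ((f.derivative.eval 1 : ℝ) : ℂ) ≠ 0 := by simpa using h2
  have h2Fne : (2:ℂ) * ((f.derivative.eval 1 : ℝ) : ℂ) ≠ 0 := by simp [hFne]
  rw [hfcd1, Complex.ofReal_div, Complex.ofReal_mul, Complex.ofReal_ofNat,
    div_eq_div_iff hFne h2Fne]
  rw [hfcd2] at hgd1
  linear_combination (((f.derivative.eval 1 : ℝ) : ℂ)) * hgd1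

lemma pathLoopA_mulVec_s15 (n : ℕ) (a b : ℝ) (i : Fin n) :
    (pathLoopA n a b).mulVec (fun _ => 1) i
      = (if (i:ℕ)+1 < n then 1 else 0) + (if 1 ≤ (i:ℕ) then 1 else 0)
        + (if (i:ℕ) = 0 then a else 0) + (if (i:ℕ) = n-1 then b else 0) := by
  rw [Matrix.mulVec, dotProduct]
  simp only [mul_one]
  rw [Finset.sum_congr rfl (fun j _ => show pathLoopA n a b i j
      = ((if (i : ℕ) + 1 = (j : ℕ) then (1:ℝ) else 0)
        + (if (j : ℕ) + 1 = (i : ℕ) then (1:ℝ) else 0))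
        + (if i = j ∧ (i : ℕ) = 0 then a else 0)
        + (if i = j ∧ (i : ℕ) = n - 1 then b else 0) from by
      unfold pathLoopA
      rw [Matrix.of_apply]
      congr 1
      congr 1
      by_cases h1 : (i : ℕ) + 1 = (j : ℕ)
      · rw [if_pos (Or.inl h1), if_pos h1, if_neg (by omega)]; norm_num
      · by_cases h2 : (j : ℕ) + 1 = (i : ℕ)
        · rw [if_pos (Or.inr h2), if_neg h1, if_pos h2]; norm_num
        · rw [if_neg (by tauto), if_neg h1, if_neg h2]; norm_num)]
  rw [Finset.sum_add_distrib, Finset.sum_add_distrib, Finset.sum_add_distrib]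
  congr 1
  congr 1
  congr 1
  · -- right neighbour
    rw [Fin.sum_univ_eq_sum_range (fun k => if (i:ℕ)+1 = k then (1:ℝ) else 0)]
    simp only [eq_comm (a := (i:ℕ)+1)]
    rw [Finset.sum_ite_eq' (Finset.range n) ((i:ℕ)+1) (fun _ => (1:ℝ))]
    simp [Finset.mem_range]
  · -- left neighbour
    rw [Fin.sum_univ_eq_sum_range (fun k => if k+1 = (i:ℕ) then (1:ℝ) else 0)]
    by_cases hi : 1 ≤ (i:ℕ)
    · rw [if_pos hi]
      rw [Finset.sum_congr rfl (fun k _ => show (if k+1 = (i:ℕ) then (1:ℝ) else 0)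
          = (if k = (i:ℕ)-1 then (1:ℝ) else 0) from by
        by_cases h : k + 1 = (i:ℕ)
        · rw [if_pos h, if_pos (by omega)]
        · rw [if_neg h, if_neg (by omega)])]
      rw [Finset.sum_ite_eq' (Finset.range n) ((i:ℕ)-1) (fun _ => (1:ℝ))]
      rw [if_pos (Finset.mem_range.mpr (by have := i.isLt; omega))]
    · rw [if_neg hi]
      apply Finset.sum_eq_zero
      intro k _
      rw [if_neg (by omega)]
  · -- loop at 0
    by_cases hc : (i:ℕ) = 0
    · simp only [hc, and_true]
      rw [Finset.sum_ite_eq (Finset.univ) i (fun _ => a), if_pos (Finset.mem_univ i)]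
      simp
    · simp [hc]
  · -- loop at n-1
    by_cases hc : (i:ℕ) = n-1
    · simp only [hc, and_true]
      rw [Finset.sum_ite_eq (Finset.univ) i (fun _ => b), if_pos (Finset.mem_univ i)]
      simp
    · simp [hc]

lemma mulVec_G (n : ℕ) (hn : 2 ≤ n) :
    (pathLoopA n 0 0).mulVec (fun _ => 1)
      = fun i : Fin n => if (i:ℕ) = 0 ∨ (i:ℕ) = n-1 then (1:ℝ) else 2 := by
  funext i
  rw [pathLoopA_mulVec_s15]
  have hlt := i.isLt
  split_ifs <;> first | (exfalso; omega) | norm_num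

lemma mulVec_H1 (m : ℕ) (hm : 1 ≤ m) :
    (pathLoopA m 0 1).mulVec (fun _ => 1)
      = fun i : Fin m => if (i:ℕ) = 0 then (1:ℝ) else 2 := by
  funext i
  rw [pathLoopA_mulVec_s15]
  have hlt := i.isLt
  split_ifs <;> first | (exfalso; omega) | norm_num

lemma mulVec_H2 (k : ℕ) (hk : 1 ≤ k) :
    (pathLoopA k 1 0).mulVec (fun _ => 1)
      = fun i : Fin k => if (i:ℕ) = k-1 then (1:ℝ) else 2 := by
  funext i
  rw [pathLoopA_mulVec_s15]
  have hlt := i.isLt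
  split_ifs <;> first | (exfalso; omega) | norm_num

lemma matG (n : ℕ) (hn : 2 ≤ n) :
    ((X : ℝ[X]) • (Matrix.diagonal (fun i : Fin n => if (i:ℕ) = 0 ∨ (i:ℕ) = n-1 then (1:ℝ) else 2)).map ⇑(C : ℝ →+* ℝ[X])
      - (pathLoopA n 0 0).map ⇑(C : ℝ →+* ℝ[X])) = triM ℝ[X] n (dG n) := by
  refine Matrix.ext fun i j => ?_
  by_cases hij : i = j
  · subst hij
    simp only [Matrix.sub_apply, Matrix.smul_apply, Matrix.map_apply,
      Matrix.diagonal_apply_eq, pathLoopA, Matrix.of_apply, triM, dG, smul_eq_mul,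
      eq_self_iff_true, true_and]
    split_ifs <;> first | (exfalso; omega) | (simp [map_ofNat]; done) | (simp [map_ofNat]; ring) | (exfalso; simp_all)
  · have hvij : ¬ ((i:ℕ) = (j:ℕ)) := fun h => hij (Fin.ext h)
    simp only [Matrix.sub_apply, Matrix.smul_apply, Matrix.map_apply,
      Matrix.diagonal_apply_ne _ hij, pathLoopA, Matrix.of_apply, triM, dG, smul_eq_mul]
    rw [if_neg hvij,
      if_neg (show ¬(i = j ∧ (i:ℕ) = 0) from fun h => hij h.1),
      if_neg (show ¬(i = j ∧ _) from fun h => hij h.1)]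
    split_ifs <;> simp

lemma matH1 (m : ℕ) (hm : 1 ≤ m) :
    ((X : ℝ[X]) • (Matrix.diagonal (fun i : Fin m => if (i:ℕ) = 0 then (1:ℝ) else 2)).map ⇑(C : ℝ →+* ℝ[X])
      - (pathLoopA m 0 1).map ⇑(C : ℝ →+* ℝ[X])) = triM ℝ[X] m (dH1 m) := by
  refine Matrix.ext fun i j => ?_
  by_cases hij : i = j
  · subst hij
    simp only [Matrix.sub_apply, Matrix.smul_apply, Matrix.map_apply,
      Matrix.diagonal_apply_eq, pathLoopA, Matrix.of_apply, triM, dH1, smul_eq_mul,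
      eq_self_iff_true, true_and]
    split_ifs <;> first | (exfalso; omega) | (simp [map_ofNat]; done) | (simp [map_ofNat]; ring) | (exfalso; simp_all)
  · have hvij : ¬ ((i:ℕ) = (j:ℕ)) := fun h => hij (Fin.ext h)
    simp only [Matrix.sub_apply, Matrix.smul_apply, Matrix.map_apply,
      Matrix.diagonal_apply_ne _ hij, pathLoopA, Matrix.of_apply, triM, dH1, smul_eq_mul]
    rw [if_neg hvij,
      if_neg (show ¬(i = j ∧ (i:ℕ) = 0) from fun h => hij h.1),
      if_neg (show ¬(i = j ∧ _) from fun h => hij h.1)]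
    split_ifs <;> simp

lemma matH2 (k : ℕ) (hk : 1 ≤ k) :
    ((X : ℝ[X]) • (Matrix.diagonal (fun i : Fin k => if (i:ℕ) = k-1 then (1:ℝ) else 2)).map ⇑(C : ℝ →+* ℝ[X])
      - (pathLoopA k 1 0).map ⇑(C : ℝ →+* ℝ[X])) = triM ℝ[X] k (dH2 k) := by
  refine Matrix.ext fun i j => ?_
  by_cases hij : i = j
  · subst hij
    simp only [Matrix.sub_apply, Matrix.smul_apply, Matrix.map_apply,
      Matrix.diagonal_apply_eq, pathLoopA, Matrix.of_apply, triM, dH2, smul_eq_mul,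
      eq_self_iff_true, true_and]
    split_ifs <;> first | (exfalso; omega) | (simp [map_ofNat]; done) | (simp [map_ofNat]; ring) | (exfalso; simp_all)
  · have hvij : ¬ ((i:ℕ) = (j:ℕ)) := fun h => hij (Fin.ext h)
    simp only [Matrix.sub_apply, Matrix.smul_apply, Matrix.map_apply,
      Matrix.diagonal_apply_ne _ hij, pathLoopA, Matrix.of_apply, triM, dH2, smul_eq_mul]
    rw [if_neg hvij,
      if_neg (show ¬(i = j ∧ (i:ℕ) = 0) from fun h => hij h.1),
      if_neg (show ¬(i = j ∧ _) from fun h => hij h.1)]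
    split_ifs <;> simp

lemma diag_unit {N : ℕ} (v : Fin N → ℝ) (h : ∀ i, v i ≠ 0) :
    IsUnit (Matrix.diagonal v).det := by
  rw [Matrix.det_diagonal]
  exact isUnit_iff_ne_zero.mpr (Finset.prod_ne_zero_iff.mpr (fun i _ => h i))

lemma kemG (n : ℕ) (hn : 2 ≤ n) :
    kemeny ((Matrix.diagonal ((pathLoopA n 0 0).mulVec (fun _ => 1)))⁻¹ * pathLoopA n 0 0)
      = (((2*((n:ℝ)-1)^2 + 1)/6 : ℝ) : ℂ) := by
  rw [mulVec_G n hn]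
  have e1 : ((n-1:ℕ):ℝ) = (n:ℝ)-1 := by rw [Nat.cast_sub (by omega)]; norm_num
  have e2 : ((n-2:ℕ):ℝ) = (n:ℝ)-2 := by rw [Nat.cast_sub (by omega)]; norm_num
  have hn' : (2:ℝ) ≤ (n:ℝ) := by exact_mod_cast hn
  set f : ℝ[X] := X * cheb (n-1) - cheb (n-2) with hfdef
  have hd : f.derivative = cheb (n-1) + X * (cheb (n-1)).derivative - (cheb (n-2)).derivative := by
    rw [hfdef, derivative_sub, derivative_mul, derivative_X, one_mul]
  have hd1 : f.derivative.eval 1 = 2*(n:ℝ) - 2 := by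
    rw [hd]
    simp only [eval_sub, eval_add, eval_mul, eval_X, one_mul, cheb_e, cheb_d1]
    rw [e1, e2]; ring
  have hd2 : f.derivative.derivative.eval 1
      = 2*((n:ℝ)-1)^2 + (((n:ℝ)-1)^2*(((n:ℝ)-1)^2-1) - ((n:ℝ)-2)^2*(((n:ℝ)-2)^2-1))/3 := by
    rw [hd, derivative_sub, derivative_add, derivative_mul, derivative_X, one_mul]
    simp only [eval_sub, eval_add, eval_mul, eval_X, eval_one, cheb_d1, cheb_d2]
    rw [e1, e2]; ring
  have hne : f.derivative.eval 1 ≠ 0 := by rw [hd1]; nlinarith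
  rw [kemeny_eq _ (pathLoopA n 0 0)
    (diag_unit _ (fun i => by split_ifs <;> norm_num))
    f (by rw [matG n hn, fG_det n hn]) (by rw [hfdef]; simp [cheb_e]) hne]
  rw [Complex.ofReal_inj]
  rw [hd1, hd2]
  have h2x : 2*(n:ℝ) - 2 ≠ 0 := by nlinarith
  field_simp
  rw [div_eq_iff (show (n:ℝ) - 1 ≠ 0 by intro h; linarith)]
  ring

lemma kemH1 (m : ℕ) (hm : 1 ≤ m) :
    kemeny ((Matrix.diagonal ((pathLoopA m 0 1).mulVec (fun _ => 1)))⁻¹ * pathLoopA m 0 1)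
      = ((((m:ℝ)*((m:ℝ)-1)/3) : ℝ) : ℂ) := by
  rw [mulVec_H1 m hm]
  rcases eq_or_lt_of_le hm with h1 | h2
  · obtain rfl : m = 1 := h1.symm
    rw [kemeny_eq _ (pathLoopA 1 0 1)
      (diag_unit _ (fun i => by split_ifs <;> norm_num))
      (X - 1) (by rw [matH1 1 le_rfl, fH1_det_one]) (by simp)
      (by simp)]
    norm_num
  · have hm2 : 2 ≤ m := h2
    have e1 : ((m-1:ℕ):ℝ) = (m:ℝ)-1 := by rw [Nat.cast_sub (by omega)]; norm_num
    have e2 : ((m-2:ℕ):ℝ) = (m:ℝ)-2 := by rw [Nat.cast_sub (by omega)]; norm_num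
    have hm' : (2:ℝ) ≤ (m:ℝ) := by exact_mod_cast hm2
    set f : ℝ[X] := X * vseq (m-1) - vseq (m-2) with hfdef
    have hd : f.derivative = vseq (m-1) + X * (vseq (m-1)).derivative - (vseq (m-2)).derivative := by
      rw [hfdef, derivative_sub, derivative_mul, derivative_X, one_mul]
    have hd1 : f.derivative.eval 1 = 2*(m:ℝ) - 1 := by
      rw [hd]
      simp only [eval_sub, eval_add, eval_mul, eval_X, one_mul, vseq_e, vseq_d1]
      rw [e1, e2]; ring
    have hd2 : f.derivative.derivative.eval 1
        = 2*((m:ℝ)-1)*(m:ℝ) + ((m:ℝ)*((m:ℝ)-1)*((m:ℝ)+1)*((m:ℝ)-2)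
          - ((m:ℝ)-1)*((m:ℝ)-2)*(m:ℝ)*((m:ℝ)-3))/3 := by
      rw [hd, derivative_sub, derivative_add, derivative_mul, derivative_X, one_mul]
      simp only [eval_sub, eval_add, eval_mul, eval_X, eval_one, vseq_d1, vseq_d2]
      rw [e1, e2]; ring
    have hne : f.derivative.eval 1 ≠ 0 := by rw [hd1]; nlinarith
    rw [kemeny_eq _ (pathLoopA m 0 1)
      (diag_unit _ (fun i => by split_ifs <;> norm_num))
      f (by rw [matH1 m hm, fH1_det m hm2]) (by rw [hfdef]; simp [vseq_e]) hne]
    rw [Complex.ofReal_inj]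
    rw [hd1, hd2]
    have h2x : 2*(m:ℝ) - 1 ≠ 0 := by nlinarith
    field_simp
    ring

lemma kemH2 (k : ℕ) (hk : 1 ≤ k) :
    kemeny ((Matrix.diagonal ((pathLoopA k 1 0).mulVec (fun _ => 1)))⁻¹ * pathLoopA k 1 0)
      = ((((k:ℝ)*((k:ℝ)-1)/3) : ℝ) : ℂ) := by
  rw [mulVec_H2 k hk]
  rcases eq_or_lt_of_le hk with h1 | h2
  · obtain rfl : k = 1 := h1.symm
    rw [kemeny_eq _ (pathLoopA 1 1 0)
      (diag_unit _ (fun i => by split_ifs <;> norm_num))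
      (X - 1) (by rw [matH2 1 le_rfl, fH2_det_one]) (by simp)
      (by simp)]
    norm_num
  · have hk2 : 2 ≤ k := h2
    have e1 : ((k-1:ℕ):ℝ) = (k:ℝ)-1 := by rw [Nat.cast_sub (by omega)]; norm_num
    have e2 : ((k-2:ℕ):ℝ) = (k:ℝ)-2 := by rw [Nat.cast_sub (by omega)]; norm_num
    have hk' : (2:ℝ) ≤ (k:ℝ) := by exact_mod_cast hk2
    set f : ℝ[X] := (2*X-1) * cheb (k-1) - cheb (k-2) with hfdef
    have hc : (derivative ((2*X-1 : ℝ[X]))) = 2 := by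
      simp
    have hd : f.derivative = 2 * cheb (k-1) + (2*X-1) * (cheb (k-1)).derivative - (cheb (k-2)).derivative := by
      rw [hfdef, derivative_sub, derivative_mul, hc]
    have hd1 : f.derivative.eval 1 = 2*(k:ℝ) - 1 := by
      rw [hd]
      simp only [eval_sub, eval_add, eval_mul, eval_X, eval_one, eval_ofNat, cheb_e, cheb_d1]
      rw [e1, e2]; ring
    have hd2 : f.derivative.derivative.eval 1
        = 4*((k:ℝ)-1)^2 + (((k:ℝ)-1)^2*(((k:ℝ)-1)^2-1) - ((k:ℝ)-2)^2*(((k:ℝ)-2)^2-1))/3 := by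
      rw [hd, derivative_sub, derivative_add, derivative_mul, derivative_mul, hc]
      simp only [eval_sub, eval_add, eval_mul, eval_X, eval_one, eval_ofNat, cheb_d1, cheb_d2,
        cheb_e, derivative_ofNat, eval_zero, zero_mul]
      rw [e1, e2]; ring
    have hne : f.derivative.eval 1 ≠ 0 := by rw [hd1]; nlinarith
    rw [kemeny_eq _ (pathLoopA k 1 0)
      (diag_unit _ (fun i => by split_ifs <;> norm_num))
      f (by rw [matH2 k hk, fH2_det k hk2]) (by rw [hfdef]; simp [cheb_e]; norm_num) hne]
    rw [Complex.ofReal_inj]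
    rw [hd1, hd2]
    have h2x : 2*(k:ℝ) - 1 ≠ 0 := by nlinarith
    field_simp
    rw [div_eq_iff (show (k:ℝ) * 2 - 1 ≠ 0 by intro h; linarith)]
    ring

/-- for the path on `n` vertices, the centrality of the edge
`(m, m+1)`, namely `c(e) = κ(G) - κ(Ĝ₁) - κ(Ĝ₂)` where `Ĝ₁`, `Ĝ₂` are the
paths on `m` and `n-m` vertices with a unit loop at the endpoint adjacent to
the removed edge, equals `(1/3)(2m(n-m) - n + 3/2)`. -/
theorem path_edge_centrality {n m : ℕ} (hm : 1 ≤ m) (hmn : m < n) :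
    kemeny ((Matrix.diagonal ((pathLoopA n 0 0).mulVec (fun _ => 1)))⁻¹ *
        pathLoopA n 0 0)
      - kemeny ((Matrix.diagonal ((pathLoopA m 0 1).mulVec (fun _ => 1)))⁻¹ *
          pathLoopA m 0 1)
      - kemeny ((Matrix.diagonal
          ((pathLoopA (n - m) 1 0).mulVec (fun _ => 1)))⁻¹ *
          pathLoopA (n - m) 1 0)
      = (((1 / 3) * (2 * (m : ℝ) * ((n : ℝ) - m) - n + 3 / 2) : ℝ) : ℂ) := by
  have hn2 : 2 ≤ n := by omega
  have hnm1 : 1 ≤ n - m := by omega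
  rw [kemG n hn2, kemH1 m hm, kemH2 (n-m) hnm1, ← Complex.ofReal_sub,
    ← Complex.ofReal_sub, Complex.ofReal_inj]
  rw [Nat.cast_sub (le_of_lt hmn)]
  ring
end
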